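/- arXiv:2510.23552 — 4 statements merged into one kernel-verified Lean document; each statement's English description precedes it below -/
import Mathlib

section
/- The Lévy-Prokhorov modality λ is self-dual: for every set X, every f: X → [0,1], and every finitely supported probability distribution μ on X, λ(f)(μ) = 1 − λ(1−f)(μ), where λ(f)(μ) = inf { ε ≥ 0 | μ({x | f(x) > ε}) ≤ ε } and (1−f)(x) = 1 − f(x). -/
/-- Total mass of a finitely supported weight function on a set. -/
noncomputable def mass {X : Type*} (s : Finset X) (μ : X → ℝ) (A : Set X) : ℝ :=
  ∑ x ∈ s, Set.indicator A μ x

lemma mass_mono {X : Type*} (s : Finset X) (μ : X → ℝ) (hμ0 : ∀ x, 0 ≤ μ x)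
    {A B : Set X} (h : A ⊆ B) : mass s μ A ≤ mass s μ B :=
  Finset.sum_le_sum fun x _ => Set.indicator_le_indicator_of_subset h (fun _ => hμ0 _) x

lemma mass_compl {X : Type*} (s : Finset X) (μ : X → ℝ)
    (hμ1 : ∑ x ∈ s, μ x = 1) (A : Set X) :
    mass s μ Aᶜ = 1 - mass s μ A := by
  unfold mass
  rw [← hμ1, ← Finset.sum_sub_distrib]
  refine Finset.sum_congr rfl fun x _ => ?_
  by_cases h : x ∈ A <;> simp [Set.indicator, h]

theorem lp_modality_self_dual {X : Type*} (μ : X → ℝ) (s : Finset X)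
    (hμ0 : ∀ x, 0 ≤ μ x) (hμs : ∀ x ∉ s, μ x = 0) (hμ1 : ∑ x ∈ s, μ x = 1)
    (f : X → ℝ) (hf : ∀ x, f x ∈ Set.Icc (0:ℝ) 1) :
    sInf {ε : ℝ | 0 ≤ ε ∧ mass s μ {x | f x > ε} ≤ ε} =
    1 - sInf {ε : ℝ | 0 ≤ ε ∧ mass s μ {x | 1 - f x > ε} ≤ ε} := by
  set S : Set ℝ := {ε : ℝ | 0 ≤ ε ∧ mass s μ {x | f x > ε} ≤ ε} with hSdef
  set T : Set ℝ := {ε : ℝ | 0 ≤ ε ∧ mass s μ {x | 1 - f x > ε} ≤ ε} with hTdef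
  have h1S : (1:ℝ) ∈ S := by
    constructor
    · norm_num
    · have : mass s μ {x | f x > 1} = 0 := by
        unfold mass
        refine Finset.sum_eq_zero fun x _ => ?_
        have : x ∉ {x | f x > (1:ℝ)} := by simp [not_lt, (hf x).2]
        simp [Set.indicator_of_notMem this]
      linarith
  have h1T : (1:ℝ) ∈ T := by
    constructor
    · norm_num
    · have : mass s μ {x | 1 - f x > 1} = 0 := by
        unfold mass
        refine Finset.sum_eq_zero fun x _ => ?_
        have : x ∉ {x | 1 - f x > (1:ℝ)} := by
          simp only [Set.mem_setOf_eq, not_lt]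
          linarith [(hf x).1]
        simp [Set.indicator_of_notMem this]
      linarith
  have hSne : S.Nonempty := ⟨1, h1S⟩
  have hTne : T.Nonempty := ⟨1, h1T⟩
  have hSbd : BddBelow S := ⟨0, fun ε hε => hε.1⟩
  have hTbd : BddBelow T := ⟨0, fun ε hε => hε.1⟩
  set a := sInf S
  set b := sInf T
  have hb0 : 0 ≤ b := le_csInf hTne fun ε hε => hε.1
  have hb1 : b ≤ 1 := csInf_le hTbd h1T
  -- Step A: 1 - b ≤ a
  have hA : 1 - b ≤ a := by
    refine le_csInf hSne fun ε hε => ?_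
    obtain ⟨hε0, hεm⟩ := hε
    have : 1 - ε ≤ b := by
      refine le_csInf hTne fun δ hδ => ?_
      obtain ⟨hδ0, hδm⟩ := hδ
      by_contra hc
      push_neg at hc
      -- δ < 1 - ε, i.e., ε < 1 - δ
      have hsub : {x | f x ≤ ε} ⊆ {x | 1 - f x > δ} := by
        intro x hx
        simp only [Set.mem_setOf_eq] at hx ⊢
        linarith
      have h1 : mass s μ {x | f x ≤ ε} ≤ mass s μ {x | 1 - f x > δ} :=
        mass_mono s μ hμ0 hsub
      have hcompl : mass s μ {x | f x ≤ ε} = 1 - mass s μ {x | f x > ε} := by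
        have : {x | f x ≤ ε} = {x | f x > ε}ᶜ := by
          ext x; simp [not_lt]
        rw [this, mass_compl s μ hμ1]
      rw [hcompl] at h1
      linarith
    linarith
  -- Step B: a ≤ 1 - b
  have hB : a ≤ 1 - b := by
    rcases eq_or_lt_of_le hb0 with hb | hb
    · have ha1 : a ≤ 1 := csInf_le hSbd h1S
      linarith
    · refine le_of_forall_pos_le_add fun η hη => ?_
      set η' := min η b with hη'def
      have hη'0 : 0 < η' := lt_min hη hb
      have hη'b : η' ≤ b := min_le_right _ _
      set δ := b - η' with hδdef
      have hδ0 : 0 ≤ δ := by simp [hδdef]; linarith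
      have hδT : δ ∉ T := fun h => absurd (csInf_le hTbd h) (by simp [hδdef]; linarith)
      have hδm : δ < mass s μ {x | 1 - f x > δ} := by
        by_contra hc
        push_neg at hc
        exact hδT ⟨hδ0, hc⟩
      have hsub : {x | f x > 1 - δ} ⊆ {x | 1 - f x > δ}ᶜ := by
        intro x hx
        simp only [Set.mem_setOf_eq, Set.mem_compl_iff, not_lt] at hx ⊢
        linarith
      have h1 : mass s μ {x | f x > 1 - δ} ≤ mass s μ {x | 1 - f x > δ}ᶜ :=
        mass_mono s μ hμ0 hsub
      rw [mass_compl s μ hμ1] at h1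
      have hmem : (1 - δ) ∈ S := ⟨by linarith, by linarith⟩
      have : a ≤ 1 - δ := csInf_le hSbd hmem
      have : a ≤ 1 - b + η' := by simp [hδdef] at this ⊢; linarith
      have hη'η : η' ≤ η := min_le_left _ _
      linarith
  linarith
end

section
/- Generalized Kantorovich-Rubinstein duality fails for the 2-Wasserstein lifting: let X = {0,1} with discrete metric d(0,1) = 1, μ = (2/3)·δ_0 + (1/3)·δ_1, ν = (1/3)·δ_0 + (2/3)·δ_1, and λ₂(f)(ρ) = (Σ_x ρ(x) f(x)²)^{1/2}. Then sup { |λ₂(f)(ν) − λ₂(f)(μ)| : f: X → [0,1] nonexpansive } ≤ 1/3, while inf { (Σ_{(x,y)} c(x,y) d(x,y)²)^{1/2} : c a coupling of μ and ν } = 1/√3. -/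
/-- Discrete metric on `Fin 2`. -/
noncomputable def dDisc (x y : Fin 2) : ℝ := if x = y then 0 else 1

/-- The 2-Wasserstein modality: square root of the expectation of the square. -/
noncomputable def lam2 (f : Fin 2 → ℝ) (ρ : Fin 2 → ℝ) : ℝ :=
  Real.sqrt (∑ x, ρ x * f x ^ 2)

/-!
Write `a = f 0`, `b = f 1`, `s = λ₂(f)(ν)`, `t = λ₂(f)(μ)`. Then `s² - t² = (b² - a²) / 3` while
`s² + t² = a² + b²`, so `s + t ≥ max a b ≥ max a² b²` because `f` takes values in `[0,1]`;
dividing gives `|s - t| ≤ 1/3`. On the other side, any coupling of `μ` and `ν` moves the surplus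
`μ 0 - ν 0 = 1/3` of mass off the diagonal, and the coupling that leaves `1/3` on each of
`(0,0)`, `(1,1)` and `(0,1)` moves nothing else, so the optimal cost is `√(1/3)`.
-/

lemma sub_le_of_sq_sub_sq_le_mul_add {s t c : ℝ} (ht : 0 ≤ t) (hc : 0 ≤ c)
    (h : s ^ 2 - t ^ 2 ≤ c * (s + t)) : s - t ≤ c := by
  by_contra! hlt
  have hpos : 0 < s + t := by linarith
  nlinarith [mul_lt_mul_of_pos_right hlt hpos]

lemma sqrt_weighted_sq_sub_le {a b p q : ℝ} (ha : a ∈ Set.Icc (0 : ℝ) 1)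
    (hb : b ∈ Set.Icc (0 : ℝ) 1) (hp : 0 ≤ p) (hq : 0 ≤ q) (hpq : p + q = 1) :
    √(p * a ^ 2 + q * b ^ 2) - √(q * a ^ 2 + p * b ^ 2) ≤ |p - q| := by
  obtain ⟨ha0, ha1⟩ := ha
  obtain ⟨hb0, hb1⟩ := hb
  set s := √(p * a ^ 2 + q * b ^ 2)
  set t := √(q * a ^ 2 + p * b ^ 2)
  have hs : 0 ≤ s := Real.sqrt_nonneg _
  have ht : 0 ≤ t := Real.sqrt_nonneg _
  have hs2 : s ^ 2 = p * a ^ 2 + q * b ^ 2 := Real.sq_sqrt (by positivity)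
  have ht2 : t ^ 2 = q * a ^ 2 + p * b ^ 2 := Real.sq_sqrt (by positivity)
  have hsum : s ^ 2 + t ^ 2 = a ^ 2 + b ^ 2 := by
    rw [hs2, ht2]; linear_combination (a ^ 2 + b ^ 2) * hpq
  have ha_le : a ≤ s + t := abs_le_of_sq_le_sq' (by nlinarith) (by positivity) |>.2
  have hb_le : b ≤ s + t := abs_le_of_sq_le_sq' (by nlinarith) (by positivity) |>.2
  refine sub_le_of_sq_sub_sq_le_mul_add ht (abs_nonneg _) ?_
  rw [hs2, ht2]
  rcases le_total q p with hqp | hpq'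
  · rw [abs_of_nonneg (sub_nonneg.2 hqp)]
    nlinarith [mul_le_mul_of_nonneg_left (mul_le_of_le_one_left ha0 ha1) (sub_nonneg.2 hqp)]
  · rw [abs_of_nonpos (sub_nonpos.2 hpq')]
    nlinarith [mul_le_mul_of_nonneg_left (mul_le_of_le_one_left hb0 hb1) (sub_nonneg.2 hpq')]

lemma lam2_fin_two (f : Fin 2 → ℝ) (p q : ℝ) :
    lam2 f ![p, q] = √(p * f 0 ^ 2 + q * f 1 ^ 2) := by
  simp [lam2, Fin.sum_univ_two]

lemma abs_lam2_swap_sub_le {f : Fin 2 → ℝ} (hf : ∀ x, f x ∈ Set.Icc (0 : ℝ) 1) {p q : ℝ}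
    (hp : 0 ≤ p) (hq : 0 ≤ q) (hpq : p + q = 1) :
    |lam2 f ![q, p] - lam2 f ![p, q]| ≤ |p - q| := by
  rw [lam2_fin_two, lam2_fin_two, abs_sub_le_iff]
  constructor
  · exact abs_sub_comm p q ▸ sqrt_weighted_sq_sub_le (hf 0) (hf 1) hq hp (by linarith)
  · exact sqrt_weighted_sq_sub_le (hf 0) (hf 1) hp hq hpq

lemma sum_mul_dDisc_sq (c : Fin 2 × Fin 2 → ℝ) :
    ∑ p : Fin 2 × Fin 2, c p * dDisc p.1 p.2 ^ 2 = c (0, 1) + c (1, 0) := by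
  simp [Fintype.sum_prod_type, Fin.sum_univ_two, dDisc]

lemma sub_le_coupling_cost {μ ν : Fin 2 → ℝ} {c : Fin 2 × Fin 2 → ℝ} (hc : ∀ p, 0 ≤ c p)
    (hrow : ∀ x, ∑ y, c (x, y) = μ x) (hcol : ∀ y, ∑ x, c (x, y) = ν y) :
    μ 0 - ν 0 ≤ c (0, 1) + c (1, 0) := by
  have hμ := hrow 0
  have hν := hcol 0
  simp only [Fin.sum_univ_two] at hμ hν
  linarith [hc (1, 0)]

theorem p_wasserstein_duality_fails :
    (sSup {v : ℝ | ∃ f : Fin 2 → ℝ, (∀ x, f x ∈ Set.Icc (0:ℝ) 1) ∧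
        (∀ x y, |f x - f y| ≤ dDisc x y) ∧
        v = |lam2 f ![1/3, 2/3] - lam2 f ![2/3, 1/3]|} ≤ 1/3) ∧
    (sInf {v : ℝ | ∃ c : Fin 2 × Fin 2 → ℝ, (∀ p, 0 ≤ c p) ∧
        (∀ x, ∑ y, c (x, y) = ![(2:ℝ)/3, 1/3] x) ∧
        (∀ y, ∑ x, c (x, y) = ![(1:ℝ)/3, 2/3] y) ∧
        v = Real.sqrt (∑ p : Fin 2 × Fin 2, c p * (dDisc p.1 p.2) ^ 2)} =
      1 / Real.sqrt 3) := by
  have h_sqrt : √(1 / 3 : ℝ) = 1 / √3 := by rw [one_div, Real.sqrt_inv, one_div]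
  constructor
  · refine Real.sSup_le ?_ (by norm_num)
    rintro v ⟨f, hf, -, rfl⟩
    have h := abs_lam2_swap_sub_le hf (p := 2 / 3) (q := 1 / 3) (by norm_num) (by norm_num)
      (by norm_num)
    norm_num at h ⊢
    exact h
  · refine IsLeast.csInf_eq ⟨⟨fun p => ![![1 / 3, 1 / 3], ![0, 1 / 3]] p.1 p.2, ?_, ?_, ?_, ?_⟩, ?_⟩
    · rintro ⟨x, y⟩
      fin_cases x <;> fin_cases y <;> norm_num
    · intro x
      fin_cases x <;> norm_num [Fin.sum_univ_two]
    · intro y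
      fin_cases y <;> norm_num [Fin.sum_univ_two]
    · rw [sum_mul_dDisc_sq, ← h_sqrt]
      norm_num
    · rintro v ⟨c, hc, hrow, hcol, rfl⟩
      rw [sum_mul_dDisc_sq, ← h_sqrt]
      refine Real.sqrt_le_sqrt ?_
      have h := sub_le_coupling_cost hc hrow hcol
      norm_num at h
      linarith
end

section
/- Lévy-Prokhorov duality (relational form, finite case): for a fuzzy relation r: X × Y → [0,1] on finite sets and probability distributions μ ∈ D(X), ν ∈ D(Y), the Wasserstein value inf_{ρ ∈ Γ(μ,ν)} λ(r)(ρ) equals the Kantorovich value sup { λ(g)(ν) ⊖ λ(f)(μ) : (f,g) an r-nonexpansive pair }, where λ(h)(ρ) = inf { ε ≥ 0 | ρ({z | h(z) > ε}) ≤ ε } and ⊖ is truncated subtraction. -/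
/-- The Lévy-Prokhorov modality on a finite type. -/
noncomputable def lam {Z : Type*} [Fintype Z] (h : Z → ℝ) (ρ : Z → ℝ) : ℝ :=
  sInf {ε : ℝ | 0 ≤ ε ∧ ∑ z, Set.indicator {z | h z > ε} ρ z ≤ ε}

open Finset

section LamLemmas
variable {Z : Type*} [Fintype Z]

/-- The defining set of `lam`, in if-then-else form. -/
def lamSet (h ρ : Z → ℝ) : Set ℝ :=
  {ε : ℝ | 0 ≤ ε ∧ ∑ z, (if ε < h z then ρ z else 0) ≤ ε}

lemma lam_eq_sInf_lamSet (h ρ : Z → ℝ) : lam h ρ = sInf (lamSet h ρ) := by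
  unfold lam lamSet
  congr 1

lemma lamSet_bddBelow (h ρ : Z → ℝ) : BddBelow (lamSet h ρ) :=
  ⟨0, fun ε hε => hε.1⟩

lemma one_mem_lamSet {h ρ : Z → ℝ} (hh : ∀ z, h z ≤ 1) : (1:ℝ) ∈ lamSet h ρ := by
  refine ⟨zero_le_one, ?_⟩
  have : ∀ z : Z, (if (1:ℝ) < h z then ρ z else 0) = 0 := by
    intro z
    simp [not_lt.2 (hh z)]
  simp [this]

lemma lam_nonneg {h ρ : Z → ℝ} (hh : ∀ z, h z ≤ 1) : 0 ≤ lam h ρ := by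
  rw [lam_eq_sInf_lamSet]
  exact le_csInf ⟨1, one_mem_lamSet hh⟩ (fun ε hε => hε.1)

lemma lam_le_one {h ρ : Z → ℝ} (hh : ∀ z, h z ≤ 1) : lam h ρ ≤ 1 := by
  rw [lam_eq_sInf_lamSet]
  exact csInf_le (lamSet_bddBelow h ρ) (one_mem_lamSet hh)

lemma lam_le {h ρ : Z → ℝ} {ε : ℝ} (hε : ε ∈ lamSet h ρ) : lam h ρ ≤ ε := by
  rw [lam_eq_sInf_lamSet]
  exact csInf_le (lamSet_bddBelow h ρ) hε

lemma le_lam {h ρ : Z → ℝ} {ε : ℝ} (hh : ∀ z, h z ≤ 1)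
    (hε : ∀ δ ∈ lamSet h ρ, ε ≤ δ) : ε ≤ lam h ρ := by
  rw [lam_eq_sInf_lamSet]
  exact le_csInf ⟨1, one_mem_lamSet hh⟩ hε

/-- `lam` belongs to its defining set. -/
lemma lam_mem_lamSet {h ρ : Z → ℝ} (hh : ∀ z, h z ≤ 1) : lam h ρ ∈ lamSet h ρ := by
  set l := lam h ρ with hl
  have hl0 : 0 ≤ l := lam_nonneg hh
  refine ⟨hl0, ?_⟩
  -- show the sum at level l is ≤ any η > l
  have key : ∀ η : ℝ, l < η → ∑ z, (if l < h z then ρ z else 0) ≤ η := by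
    intro η hη
    by_cases hV : ∃ z : Z, l < h z
    · -- let ε' be the minimal value of h above l
      have hVne : ((Finset.univ.image h).filter (fun v => l < v)).Nonempty := by
        obtain ⟨z, hz⟩ := hV
        exact ⟨h z, by simp [hz]⟩
      obtain ⟨ε', hε'V, hε'min⟩ : ∃ ε' ∈ (Finset.univ.image h).filter (fun v => l < v),
          ∀ v ∈ (Finset.univ.image h).filter (fun v => l < v), ε' ≤ v :=
        ⟨_, Finset.min'_mem _ hVne, fun v hv => Finset.min'_le _ v hv⟩
      have hlε' : l < ε' := (Finset.mem_filter.1 hε'V).2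
      have hsS : ∃ s ∈ lamSet h ρ, s < min η ε' := by
        have : sInf (lamSet h ρ) < min η ε' := by
          rw [← lam_eq_sInf_lamSet]
          exact lt_min hη hlε'
        exact exists_lt_of_csInf_lt ⟨1, one_mem_lamSet hh⟩ this
      obtain ⟨s, hsmem, hslt⟩ := hsS
      have hls : l ≤ s := lam_le hsmem
      have hset : ∀ z : Z, (l < h z) ↔ (s < h z) := by
        intro z
        constructor
        · intro hz
          have : ε' ≤ h z := by
            apply hε'min
            simp [hz]
          exact lt_of_lt_of_le (lt_of_lt_of_le hslt (le_trans (min_le_right _ _) le_rfl)) this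
        · intro hz; exact lt_of_le_of_lt hls hz
      calc ∑ z, (if l < h z then ρ z else 0) = ∑ z, (if s < h z then ρ z else 0) := by
            apply Finset.sum_congr rfl
            intro z _
            simp only [hset z]
          _ ≤ s := hsmem.2
          _ ≤ η := le_of_lt (lt_of_lt_of_le hslt (min_le_left _ _))
    · push_neg at hV
      have : ∀ z : Z, (if l < h z then ρ z else 0) = 0 := by
        intro z; simp [not_lt.2 (hV z)]
      simp only [this, Finset.sum_const_zero]
      exact le_of_lt (lt_of_le_of_lt hl0 hη)
  by_contra hcon
  push_neg at hcon
  have := key ((l + ∑ z, (if l < h z then ρ z else 0)) / 2) (by linarith)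
  linarith

end LamLemmas

section WeakDuality
variable {X Y : Type*} [Fintype X] [Fintype Y]

lemma weak_duality
    (r : X → Y → ℝ) (hr : ∀ x y, r x y ∈ Set.Icc (0:ℝ) 1)
    (μ : X → ℝ) (ν : Y → ℝ)
    (ρ : X × Y → ℝ) (hρ0 : ∀ p, 0 ≤ ρ p)
    (hmx : ∀ x, ∑ y, ρ (x, y) = μ x) (hmy : ∀ y, ∑ x, ρ (x, y) = ν y)
    (f : X → ℝ) (g : Y → ℝ)
    (hf : ∀ x, f x ∈ Set.Icc (0:ℝ) 1) (hg : ∀ y, g y ∈ Set.Icc (0:ℝ) 1)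
    (hne : ∀ x y, g y - f x ≤ r x y) :
    max 0 (lam g ν - lam f μ) ≤ lam (fun p : X × Y => r p.1 p.2) ρ := by
  have hr1 : ∀ p : X × Y, r p.1 p.2 ≤ 1 := fun p => (hr p.1 p.2).2
  set w := lam (fun p : X × Y => r p.1 p.2) ρ with hw
  have hwmem := lam_mem_lamSet (h := fun p : X × Y => r p.1 p.2) (ρ := ρ) hr1
  have hw0 : 0 ≤ w := hwmem.1
  refine max_le hw0 ?_
  set d := lam f μ with hd
  have hdmem := lam_mem_lamSet (h := f) (ρ := μ) (fun x => (hf x).2)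
  have hd0 : 0 ≤ d := hdmem.1
  -- suffices: lam g ν ≤ w + d
  have hkey : lam g ν ≤ w + d := by
    apply lam_le
    refine ⟨by linarith, ?_⟩
    have hY : ∀ y : Y, (if w + d < g y then ν y else 0)
        = ∑ x, (if w + d < g y then ρ (x, y) else 0) := by
      intro y
      by_cases hc : w + d < g y <;> simp [hc, hmy y]
    have hite : ∀ (P : Prop) [Decidable P] (p : X × Y), (0:ℝ) ≤ if P then ρ p else 0 := by
      intro P _ p
      split
      · exact hρ0 p
      · exact le_rfl
    calc ∑ y, (if w + d < g y then ν y else 0)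
        = ∑ y, ∑ x, (if w + d < g y then ρ (x, y) else 0) := by
          exact Finset.sum_congr rfl (fun y _ => hY y)
      _ = ∑ x, ∑ y, (if w + d < g y then ρ (x, y) else 0) := Finset.sum_comm
      _ ≤ ∑ x, ∑ y, ((if w < r x y then ρ (x, y) else 0) + (if d < f x then ρ (x, y) else 0)) := by
          apply Finset.sum_le_sum; intro x _
          apply Finset.sum_le_sum; intro y _
          by_cases hc : w + d < g y
          · simp only [hc, if_pos]
            by_cases hc1 : w < r x y
            · simp only [hc1, if_pos]
              have := hite (d < f x) (x,y)
              linarith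
            · push_neg at hc1
              have hc2 : d < f x := by
                have := hne x y
                linarith
              simp only [hc2, if_pos]
              have := hite (w < r x y) (x,y)
              linarith
          · simp only [hc, if_neg, not_false_iff]
            have h1 := hite (w < r x y) (x,y)
            have h2 := hite (d < f x) (x,y)
            linarith
      _ = (∑ x, ∑ y, (if w < r x y then ρ (x, y) else 0))
            + ∑ x, ∑ y, (if d < f x then ρ (x, y) else 0) := by
          rw [← Finset.sum_add_distrib]
          exact Finset.sum_congr rfl (fun x _ => Finset.sum_add_distrib)
      _ ≤ w + d := by
          have h1 : (∑ x, ∑ y, (if w < r x y then ρ (x, y) else 0)) ≤ w := by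
            have := hwmem.2
            calc (∑ x, ∑ y, (if w < r x y then ρ (x, y) else 0))
                = ∑ p : X × Y, (if w < r p.1 p.2 then ρ p else 0) := by
                  rw [Fintype.sum_prod_type]
              _ ≤ w := this
          have h2 : (∑ x, ∑ y, (if d < f x then ρ (x, y) else 0)) ≤ d := by
            have : ∀ x : X, (∑ y, (if d < f x then ρ (x, y) else 0))
                = (if d < f x then μ x else 0) := by
              intro x
              by_cases hc : d < f x <;> simp [hc, hmx x]
            calc (∑ x, ∑ y, (if d < f x then ρ (x, y) else 0))
                = ∑ x, (if d < f x then μ x else 0) :=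
                  Finset.sum_congr rfl (fun x _ => this x)
              _ ≤ d := hdmem.2
          linarith
  have := lam_nonneg (h := f) (ρ := μ) (fun x => (hf x).2)
  linarith

end WeakDuality

section Cone
open Filter Topology

variable {E : Type*} [NormedAddCommGroup E] [NormedSpace ℝ E]
variable {ι : Type*} [Fintype ι] [Nonempty ι]

/-- The cone of nonnegative combinations of finitely many vectors. -/
def coneOf (g : ι → E) : Set E :=
  {v | ∃ w : ι → ℝ, (∀ i, 0 ≤ w i) ∧ v = ∑ i, w i • g i}

lemma coneOf_convex (g : ι → E) : Convex ℝ (coneOf g) := by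
  rintro v ⟨w, hw, rfl⟩ v' ⟨w', hw', rfl⟩ a b ha hb _
  refine ⟨fun i => a * w i + b * w' i,
    fun i => add_nonneg (mul_nonneg ha (hw i)) (mul_nonneg hb (hw' i)), ?_⟩
  rw [Finset.smul_sum, Finset.smul_sum, ← Finset.sum_add_distrib]
  apply Finset.sum_congr rfl
  intro i _
  rw [add_smul, smul_smul, smul_smul]

lemma coneOf_zero_mem (g : ι → E) : (0:E) ∈ coneOf g :=
  ⟨0, fun i => le_rfl, by simp⟩

lemma coneOf_smul_mem (g : ι → E) {v : E} (hv : v ∈ coneOf g) {t : ℝ} (ht : 0 ≤ t) :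
    t • v ∈ coneOf g := by
  obtain ⟨w, hw, rfl⟩ := hv
  refine ⟨fun i => t * w i, fun i => mul_nonneg ht (hw i), ?_⟩
  rw [Finset.smul_sum]
  exact Finset.sum_congr rfl (fun i _ => smul_smul t (w i) (g i))

lemma coneOf_gen_mem (g : ι → E) (i : ι) : g i ∈ coneOf g := by
  classical
  refine ⟨fun j => if j = i then 1 else 0, fun j => by dsimp; split <;> norm_num, ?_⟩
  simp [ite_smul]

lemma coneOf_isClosed (g : ι → E) (L : E →L[ℝ] ℝ) (hL : ∀ i, 1 ≤ L (g i)) :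
    IsClosed (coneOf g) := by
  classical
  -- K = image of the standard simplex
  set T : (ι → ℝ) → E := fun w => ∑ i, w i • g i with hT
  have hTcont : Continuous T := by
    apply continuous_finset_sum
    intro i _
    exact (continuous_apply i).smul continuous_const
  set K : Set E := T '' stdSimplex ℝ ι with hK
  have hKcomp : IsCompact K := (isCompact_stdSimplex ℝ ι).image hTcont
  have hKL : ∀ k ∈ K, 1 ≤ L k := by
    rintro k ⟨w, hw, rfl⟩
    have : L (T w) = ∑ i, w i * L (g i) := by
      rw [hT]
      simp only [map_sum, map_smul, smul_eq_mul]
    rw [this]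
    calc (1:ℝ) = ∑ i, w i := hw.2.symm
      _ ≤ ∑ i, w i * L (g i) := by
          apply Finset.sum_le_sum
          intro i _
          nth_rewrite 1 [← mul_one (w i)]
          exact mul_le_mul_of_nonneg_left (hL i) (hw.1 i)
  have hCeq : coneOf g = {v | ∃ t : ℝ, 0 ≤ t ∧ ∃ k ∈ K, v = t • k} := by
    ext v
    constructor
    · rintro ⟨w, hw, rfl⟩
      by_cases hts : ∑ i, w i = 0
      · have hw0 : ∀ i, w i = 0 := by
          intro i
          have := Finset.sum_eq_zero_iff_of_nonneg (fun i _ => hw i) |>.1 hts i (Finset.mem_univ i)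
          exact this
        refine ⟨0, le_rfl, T (fun _ => (Fintype.card ι : ℝ)⁻¹), ⟨_, ?_, rfl⟩, ?_⟩
        · have hcard : 0 < (Fintype.card ι : ℝ) := by exact_mod_cast Fintype.card_pos
          constructor
          · intro i
            exact inv_nonneg.2 hcard.le
          · rw [Finset.sum_const, nsmul_eq_mul, Finset.card_univ]
            field_simp
        · rw [zero_smul]
          apply Finset.sum_eq_zero
          intro i _
          rw [hw0 i, zero_smul]
      · have htpos : 0 < ∑ i, w i := lt_of_le_of_ne (Finset.sum_nonneg (fun i _ => hw i)) (Ne.symm hts)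
        refine ⟨∑ i, w i, le_of_lt htpos, T (fun i => w i / ∑ j, w j), ⟨_, ?_, rfl⟩, ?_⟩
        · constructor
          · intro i
            exact div_nonneg (hw i) htpos.le
          · rw [← Finset.sum_div]
            field_simp
        · rw [hT]
          simp only
          rw [Finset.smul_sum]
          apply Finset.sum_congr rfl
          intro i _
          rw [smul_smul]
          congr 1
          field_simp
    · rintro ⟨t, ht, k, ⟨w, hw, rfl⟩, rfl⟩
      refine ⟨fun i => t * w i, fun i => mul_nonneg ht (hw.1 i), ?_⟩
      rw [hT]
      simp only
      rw [Finset.smul_sum]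
      exact Finset.sum_congr rfl (fun i _ => (smul_smul t (w i) (g i)))
  rw [hCeq]
  apply IsSeqClosed.isClosed
  intro u x hu hux
  choose t ht k hk hrep using hu
  have hbdd : ∃ B : ℝ, ∀ n, t n ≤ B := by
    have hconv : Tendsto (fun n => L (u n)) atTop (𝓝 (L x)) := (L.continuous.tendsto x).comp hux
    obtain ⟨B, hB⟩ := hconv.bddAbove_range
    refine ⟨B, fun n => ?_⟩
    have h1 : t n ≤ t n * L (k n) := by
      nth_rewrite 1 [← mul_one (t n)]
      exact mul_le_mul_of_nonneg_left (hKL _ (hk n)) (ht n)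
    have h2 : L (u n) = t n * L (k n) := by
      rw [hrep n, map_smul, smul_eq_mul]
    have h3 : L (u n) ≤ B := hB (Set.mem_range_self n)
    linarith
  obtain ⟨B, hB⟩ := hbdd
  have hcomp : IsCompact ((Set.Icc (0:ℝ) B) ×ˢ K) := (isCompact_Icc).prod hKcomp
  have hmem : ∀ n, ((t n, k n) : ℝ × E) ∈ (Set.Icc (0:ℝ) B) ×ˢ K :=
    fun n => ⟨⟨ht n, hB n⟩, hk n⟩
  obtain ⟨⟨t₀, k₀⟩, hmem₀, φ, hφ, hconv⟩ := hcomp.tendsto_subseq hmem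
  have hsk : Tendsto (fun n => t (φ n) • k (φ n)) atTop (𝓝 (t₀ • k₀)) := by
    have hc : Continuous (fun p : ℝ × E => p.1 • p.2) := continuous_smul
    exact (hc.tendsto (t₀, k₀)).comp hconv
  have hux' : Tendsto (fun n => u (φ n)) atTop (𝓝 x) := hux.comp hφ.tendsto_atTop
  have : x = t₀ • k₀ := by
    apply tendsto_nhds_unique hux'
    convert hsk using 1
    ext n
    exact hrep (φ n)
  exact ⟨t₀, hmem₀.1.1, k₀, hmem₀.2, this⟩

/-- Farkas-type separation: if a point is not in the cone, there is a linear functional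
nonpositive on the generators and positive at the point. -/
lemma coneOf_separation [FiniteDimensional ℝ E] (g : ι → E) (L : E →L[ℝ] ℝ)
    (hL : ∀ i, 1 ≤ L (g i)) {b : E} (hb : b ∉ coneOf g) :
    ∃ φ : E →L[ℝ] ℝ, (∀ i, φ (g i) ≤ 0) ∧ 0 < φ b := by
  obtain ⟨φ, u, hlt, hub⟩ := geometric_hahn_banach_closed_point
    (coneOf_convex g) (coneOf_isClosed g L hL) hb
  have hu0 : 0 < u := by
    have := hlt 0 (coneOf_zero_mem g)
    simpa using this
  refine ⟨φ, ?_, lt_trans hu0 hub⟩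
  intro i
  by_contra hcon
  push_neg at hcon
  -- scale: t • g i ∈ cone, φ (t • g i) = t * φ (g i) < u for all t ≥ 0 → contradiction
  have hscale : ∀ t : ℝ, 0 ≤ t → t * φ (g i) < u := by
    intro t ht'
    have := hlt (t • g i) (coneOf_smul_mem g (coneOf_gen_mem g i) ht')
    rwa [map_smul, smul_eq_mul] at this
  have h1 := hscale ((u + 1) / φ (g i)) (by positivity)
  rw [div_mul_cancel₀] at h1
  · linarith
  · exact ne_of_gt hcon

end Cone

section Strassen
variable {X Y : Type*} [Fintype X] [Fintype Y]

lemma strassen_potentials [Nonempty X] [Nonempty Y]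
    (c : X → Y → ℝ) (hc0 : ∀ x y, 0 ≤ c x y)
    (μ : X → ℝ) (ν : Y → ℝ) (ε : ℝ)
    (hno : ∀ ρ : X × Y → ℝ, (∀ p, 0 ≤ ρ p) → (∀ x, ∑ y, ρ (x, y) = μ x) →
      (∀ y, ∑ x, ρ (x, y) = ν y) → ¬ (∑ p : X × Y, ρ p * c p.1 p.2 ≤ ε))
    (hμ0 : ∀ x, 0 ≤ μ x) (hμ1 : ∑ x, μ x = 1)
    (hν0 : ∀ y, 0 ≤ ν y) (hν1 : ∑ y, ν y = 1) :
    ∃ a : X → ℝ, ∃ b : Y → ℝ, (∀ x y, a x - b y ≤ c x y) ∧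
      ε < ∑ x, μ x * a x - ∑ y, ν y * b y := by
  classical
  set indX : X → (X → ℝ) := fun x => (fun x' => if x' = x then 1 else 0) with hindX
  set indY : Y → (Y → ℝ) := fun y => (fun y' => if y' = y then 1 else 0) with hindY
  set gen : (X × Y) ⊕ Unit → (X → ℝ) × (Y → ℝ) × ℝ := fun i =>
    Sum.rec (fun p => (indX p.1, indY p.2, c p.1 p.2)) (fun _ => (0, 0, 1)) i with hgen
  -- the linear functional summing all coordinates
  set L₀ : (X → ℝ) × (Y → ℝ) × ℝ →ₗ[ℝ] ℝ :=
    { toFun := fun v => (∑ x, v.1 x) + (∑ y, v.2.1 y) + v.2.2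
      map_add' := by
        intro v v'
        simp only [Prod.fst_add, Prod.snd_add, Pi.add_apply, Finset.sum_add_distrib]
        ring
      map_smul' := by
        intro m v
        simp only [Prod.smul_fst, Prod.smul_snd, Pi.smul_apply, smul_eq_mul,
          RingHom.id_apply, ← Finset.mul_sum]
        ring } with hL₀
  set L : (X → ℝ) × (Y → ℝ) × ℝ →L[ℝ] ℝ := L₀.toContinuousLinearMap with hL
  have hLgen : ∀ i, 1 ≤ L (gen i) := by
    intro i
    cases i with
    | inl p =>
      have h1 : (∑ x, indX p.1 x) = 1 := by simp [hindX]
      have h2 : (∑ y, indY p.2 y) = 1 := by simp [hindY]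
      show (1:ℝ) ≤ (∑ x, indX p.1 x) + (∑ y, indY p.2 y) + c p.1 p.2
      rw [h1, h2]
      have := hc0 p.1 p.2
      linarith
    | inr u =>
      show (1:ℝ) ≤ (∑ x, (0:X → ℝ) x) + (∑ y, (0:Y → ℝ) y) + 1
      simp
  -- the target point is not in the cone
  have hbnot : ((μ, ν, ε) : ((X → ℝ) × (Y → ℝ) × ℝ)) ∉ coneOf gen := by
    rintro ⟨w, hw, heq⟩
    set ρ : X × Y → ℝ := fun p => w (Sum.inl p) with hρ
    have hfst : ∀ x : X, (∑ i, w i • gen i).1 x = ∑ y, ρ (x, y) := by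
      intro x
      have h1 : (∑ i, w i • gen i).1 x = ∑ i, w i * (gen i).1 x := by
        rw [Prod.fst_sum, Finset.sum_apply]
        simp [Prod.smul_fst]
      rw [h1, Fintype.sum_sum_type]
      simp only [Finset.univ_unique, Finset.sum_singleton]
      have hg1 : ∀ p : X × Y, (gen (Sum.inl p)).1 = indX p.1 := fun p => rfl
      have hg2 : (gen (Sum.inr ())).1 = 0 := rfl
      simp only [hg1, hg2, Pi.zero_apply, mul_zero, add_zero]
      rw [Fintype.sum_prod_type]
      simp only [hindX, mul_ite, mul_one, mul_zero]
      rw [Finset.sum_comm]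
      simp [Finset.sum_ite_eq, hρ]
    have hsnd : ∀ y : Y, (∑ i, w i • gen i).2.1 y = ∑ x, ρ (x, y) := by
      intro y
      have h1 : (∑ i, w i • gen i).2.1 y = ∑ i, w i * (gen i).2.1 y := by
        rw [Prod.snd_sum, Prod.fst_sum, Finset.sum_apply]
        simp [Prod.smul_snd, Prod.smul_fst]
      rw [h1, Fintype.sum_sum_type]
      simp only [Finset.univ_unique, Finset.sum_singleton]
      have hg1 : ∀ p : X × Y, (gen (Sum.inl p)).2.1 = indY p.2 := fun p => rfl
      have hg2 : (gen (Sum.inr ())).2.1 = 0 := rfl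
      simp only [hg1, hg2, Pi.zero_apply, mul_zero, add_zero]
      rw [Fintype.sum_prod_type]
      simp only [hindY, mul_ite, mul_one, mul_zero]
      simp [Finset.sum_ite_eq, hρ]
    have hthd : (∑ i, w i • gen i).2.2 = (∑ p : X × Y, ρ p * c p.1 p.2) + w (Sum.inr ()) := by
      have h1 : (∑ i, w i • gen i).2.2 = ∑ i, w i * (gen i).2.2 := by
        rw [Prod.snd_sum, Prod.snd_sum]
        simp [Prod.smul_snd]
      rw [h1, Fintype.sum_sum_type]
      simp only [Finset.univ_unique, Finset.sum_singleton]
      have hg1 : ∀ p : X × Y, (gen (Sum.inl p)).2.2 = c p.1 p.2 := fun p => rfl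
      have hg2 : (gen (Sum.inr ())).2.2 = 1 := rfl
      simp only [hg1, hg2, mul_one]
      rfl
    have hmx : ∀ x, ∑ y, ρ (x, y) = μ x := by
      intro x
      have := congrFun (congrArg Prod.fst heq) x
      rw [hfst x] at this
      exact this.symm
    have hmy : ∀ y, ∑ x, ρ (x, y) = ν y := by
      intro y
      have := congrFun (congrArg (fun v => v.2.1) heq) y
      simp only at this
      rw [hsnd y] at this
      exact this.symm
    apply hno ρ (fun p => hw (Sum.inl p)) hmx hmy
    have heps := congrArg (fun v => v.2.2) heq
    simp only at heps
    rw [hthd] at heps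
    have := hw (Sum.inr ())
    linarith
  obtain ⟨φ, hφgen, hφb⟩ := coneOf_separation gen L hLgen hbnot
  set α : X → ℝ := fun x => φ (indX x, 0, 0) with hα
  set β : Y → ℝ := fun y => φ (0, indY y, 0) with hβ
  set γ : ℝ := φ (0, 0, 1) with hγ
  have hdecomp : ∀ p : X × Y, φ (gen (Sum.inl p)) = α p.1 + β p.2 + γ * c p.1 p.2 := by
    intro p
    have : gen (Sum.inl p) = (indX p.1, (0:Y → ℝ), (0:ℝ)) + ((0:X → ℝ), indY p.2, (0:ℝ))
        + c p.1 p.2 • ((0:X → ℝ), (0:Y → ℝ), (1:ℝ)) := by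
      simp [hgen, Prod.ext_iff]
    rw [this, map_add, map_add, map_smul]
    simp [hα, hβ, hγ, smul_eq_mul]
    ring
  have hgen_le : ∀ p : X × Y, α p.1 + β p.2 + γ * c p.1 p.2 ≤ 0 := by
    intro p
    rw [← hdecomp p]
    exact hφgen (Sum.inl p)
  have hγle : γ ≤ 0 := by
    have := hφgen (Sum.inr ())
    simpa [hγ, hgen] using this
  have hpoint : φ ((μ, ν, ε) : ((X → ℝ) × (Y → ℝ) × ℝ)) = (∑ x, μ x * α x) + (∑ y, ν y * β y) + ε * γ := by
    have hdec : ((μ, ν, ε) : ((X → ℝ) × (Y → ℝ) × ℝ)) = (∑ x, μ x • ((indX x, 0, 0) : ((X → ℝ) × (Y → ℝ) × ℝ)))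
        + (∑ y, ν y • (((0:X → ℝ), indY y, 0) : ((X → ℝ) × (Y → ℝ) × ℝ)))
        + ε • (((0:X → ℝ), (0:Y → ℝ), (1:ℝ)) : ((X → ℝ) × (Y → ℝ) × ℝ)) := by
      rw [Prod.ext_iff, Prod.ext_iff]
      refine ⟨?_, ?_, ?_⟩
      · simp only [Prod.fst_add, Prod.fst_sum, Prod.smul_fst]
        funext x
        simp [hindX, Finset.sum_apply, Pi.smul_apply, smul_eq_mul, mul_ite,
          Finset.sum_ite_eq]
      · simp only [Prod.snd_add, Prod.fst_add, Prod.snd_sum, Prod.fst_sum, Prod.smul_snd,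
          Prod.smul_fst]
        funext y
        simp [hindY, Finset.sum_apply, Pi.smul_apply, smul_eq_mul, mul_ite,
          Finset.sum_ite_eq]
      · simp [Prod.snd_sum, Prod.smul_snd, smul_eq_mul]
    rw [hdec, map_add, map_add, map_smul, map_sum, map_sum]
    simp only [map_smul, smul_eq_mul]
    rfl
  have hφpos : 0 < (∑ x, μ x * α x) + (∑ y, ν y * β y) + ε * γ := by
    rw [← hpoint]; exact hφb
  -- γ cannot be zero
  have hγlt : γ < 0 := by
    rcases lt_or_eq_of_le hγle with h | h
    · exact h
    · exfalso
      have hsum0 : (∑ x, μ x * α x) + (∑ y, ν y * β y) ≤ 0 := by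
        have hterm : ∀ x y, μ x * ν y * (α x + β y) ≤ 0 := by
          intro x y
          have h1 := hgen_le (x, y)
          rw [h] at h1
          simp only [zero_mul, add_zero] at h1
          exact mul_nonpos_of_nonneg_of_nonpos (mul_nonneg (hμ0 x) (hν0 y)) h1
        have e1 : ∀ x, (∑ y, μ x * ν y * (α x + β y))
            = μ x * α x + μ x * (∑ y, ν y * β y) := by
          intro x
          have hpt : ∀ y, μ x * ν y * (α x + β y) = μ x * α x * ν y + μ x * (ν y * β y) := by
            intro y; ring
          rw [Finset.sum_congr rfl (fun y _ => hpt y), Finset.sum_add_distrib,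
            ← Finset.mul_sum, ← Finset.mul_sum, hν1]
          ring
        have e2 : (∑ x, ∑ y, μ x * ν y * (α x + β y))
            = (∑ x, μ x * α x) + (∑ y, ν y * β y) := by
          rw [Finset.sum_congr rfl (fun x _ => e1 x), Finset.sum_add_distrib,
            ← Finset.sum_mul, hμ1]
          ring
        rw [← e2]
        apply Finset.sum_nonpos
        intro x _
        exact Finset.sum_nonpos (fun y _ => hterm x y)
      rw [h] at hφpos
      simp only [mul_zero, add_zero] at hφpos
      linarith
  clear_value α β γ
  clear hφgen hφb hdecomp hγle hpoint hbnot hno hLgen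
  clear_value L L₀ gen indX indY
  clear hL hL₀ hgen hindX hindY hα hβ hγ
  clear L L₀ gen indX indY
  refine ⟨fun x => α x / (-γ), fun y => -β y / (-γ), ?_, ?_⟩
  · intro x y
    have h1 := hgen_le (x, y)
    have hpos : 0 < -γ := by linarith
    have hdiv : α x / -γ - -β y / -γ = (α x + β y) / -γ := by ring
    rw [hdiv, div_le_iff₀ hpos]
    nlinarith [h1]
  · have hpos : 0 < -γ := by linarith
    have e1 : (∑ x, μ x * (α x / -γ)) = (∑ x, μ x * α x) * (-γ)⁻¹ := by
      rw [Finset.sum_mul]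
      exact Finset.sum_congr rfl (fun x _ => by rw [div_eq_mul_inv]; ring)
    have e2 : (∑ y, ν y * (-β y / -γ)) = -((∑ y, ν y * β y) * (-γ)⁻¹) := by
      rw [Finset.sum_mul, ← Finset.sum_neg_distrib]
      exact Finset.sum_congr rfl (fun y _ => by rw [div_eq_mul_inv]; ring)
    rw [e1, e2, sub_neg_eq_add, ← add_mul, ← div_eq_mul_inv, lt_div_iff₀ hpos]
    nlinarith [hφpos]

end Strassen

section Cut
open MeasureTheory
variable {X Y : Type*} [Fintype X] [Fintype Y]

lemma integral_ite_lt {v : ℝ} (h0 : 0 ≤ v) (h1 : v ≤ 1) :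
    ∫ t in Set.Ioc (0:ℝ) 1, (if t < v then (1:ℝ) else 0) = v := by
  have hfun : (fun t : ℝ => if t < v then (1:ℝ) else 0)
      = Set.indicator (Set.Iio v) (fun _ => (1:ℝ)) := by
    funext t
    simp [Set.indicator_apply]
  rw [hfun, MeasureTheory.setIntegral_indicator measurableSet_Iio]
  have hset : Set.Ioc (0:ℝ) 1 ∩ Set.Iio v = Set.Ioo 0 v := by
    ext t
    constructor
    · rintro ⟨⟨ht0, _⟩, htv⟩
      exact ⟨ht0, htv⟩
    · rintro ⟨ht0, htv⟩
      exact ⟨⟨ht0, le_trans (le_of_lt htv) h1⟩, htv⟩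
  rw [hset, MeasureTheory.setIntegral_const, MeasureTheory.measureReal_def, Real.volume_Ioo, smul_eq_mul, mul_one,
    ENNReal.toReal_ofReal (by linarith)]
  ring

lemma integrable_ite_lt (v : ℝ) :
    IntegrableOn (fun t : ℝ => if t < v then (1:ℝ) else 0) (Set.Ioc (0:ℝ) 1) := by
  have hfun : (fun t : ℝ => if t < v then (1:ℝ) else 0)
      = Set.indicator (Set.Iio v) (fun _ => (1:ℝ)) := by
    funext t
    simp [Set.indicator_apply]
  rw [hfun]
  apply MeasureTheory.Integrable.indicator _ measurableSet_Iio
  have hIO : IntegrableOn (fun _ : ℝ => (1:ℝ)) (Set.Ioc (0:ℝ) 1) := by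
    exact MeasureTheory.integrableOn_const (by rw [Real.volume_Ioc]; exact ENNReal.ofReal_ne_top)
  exact hIO

lemma strassen_cut [Nonempty X] [Nonempty Y]
    (c : X → Y → ℝ) (hc0 : ∀ x y, 0 ≤ c x y) (hc1 : ∀ x y, c x y ≤ 1)
    (μ : X → ℝ) (ν : Y → ℝ) (ε : ℝ) (hε0 : 0 ≤ ε)
    (hno : ∀ ρ : X × Y → ℝ, (∀ p, 0 ≤ ρ p) → (∀ x, ∑ y, ρ (x, y) = μ x) →
      (∀ y, ∑ x, ρ (x, y) = ν y) → ¬ (∑ p : X × Y, ρ p * c p.1 p.2 ≤ ε))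
    (hμ0 : ∀ x, 0 ≤ μ x) (hμ1 : ∑ x, μ x = 1)
    (hν0 : ∀ y, 0 ≤ ν y) (hν1 : ∑ y, ν y = 1) :
    ∃ S : Finset X, ∃ N : Finset Y,
      (∀ x ∈ S, ∀ y, c x y = 0 → y ∈ N) ∧
      ε < (∑ x ∈ S, μ x) - (∑ y ∈ N, ν y) := by
  classical
  obtain ⟨a, b, hab, hobj⟩ := strassen_potentials c hc0 μ ν ε hno hμ0 hμ1 hν0 hν1
  have hXne : (Finset.univ : Finset X).Nonempty := Finset.univ_nonempty
  have hYne : (Finset.univ : Finset Y).Nonempty := Finset.univ_nonempty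
  set b₁ : Y → ℝ := fun y => Finset.univ.sup' hXne (fun x => a x - c x y) with hb₁
  set a₁ : X → ℝ := fun x => Finset.univ.inf' hYne (fun y => b₁ y + c x y) with ha₁
  set m : ℝ := Finset.univ.inf' hYne b₁ with hm
  have hb₁le : ∀ y, b₁ y ≤ b y := by
    intro y
    apply Finset.sup'_le
    intro x _
    have := hab x y
    linarith
  have hab₁ : ∀ x y, a x - c x y ≤ b₁ y := by
    intro x y
    exact Finset.le_sup' (fun x => a x - c x y) (Finset.mem_univ x)
  have ha₁ge : ∀ x, a x ≤ a₁ x := by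
    intro x
    apply Finset.le_inf'
    intro y _
    have := hab₁ x y
    linarith
  have hab₂ : ∀ x y, a₁ x - b₁ y ≤ c x y := by
    intro x y
    have : a₁ x ≤ b₁ y + c x y := Finset.inf'_le _ (Finset.mem_univ y)
    linarith
  have hm_le : ∀ y, m ≤ b₁ y := fun y => Finset.inf'_le _ (Finset.mem_univ y)
  have ha₁m : ∀ x, m ≤ a₁ x := by
    intro x
    apply Finset.le_inf'
    intro y _
    have := hm_le y
    have := hc0 x y
    linarith
  have ha₁ub : ∀ x, a₁ x ≤ m + 1 := by
    intro x
    obtain ⟨y₀, _, hy₀⟩ := Finset.exists_mem_eq_inf' hYne b₁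
    have h1 : a₁ x ≤ b₁ y₀ + c x y₀ := Finset.inf'_le _ (Finset.mem_univ y₀)
    have h2 := hc1 x y₀
    rw [← hm] at hy₀
    rw [← hy₀] at h1
    linarith
  have hb₁ub : ∀ y, b₁ y ≤ m + 1 := by
    intro y
    obtain ⟨x₀, _, hx₀⟩ := Finset.exists_mem_eq_sup' hXne (fun x => a x - c x y)
    have h1 : b₁ y = a x₀ - c x₀ y := hx₀
    have h2 := hc0 x₀ y
    have h3 := ha₁ge x₀
    have h4 := ha₁ub x₀
    linarith
  -- shifted potentials in [0,1]
  set a₂ : X → ℝ := fun x => a₁ x - m with ha₂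
  set b₂ : Y → ℝ := fun y => b₁ y - m with hb₂
  have ha₂range : ∀ x, 0 ≤ a₂ x ∧ a₂ x ≤ 1 := by
    intro x
    constructor
    · have := ha₁m x; simp only [ha₂]; linarith
    · have := ha₁ub x; simp only [ha₂]; linarith
  have hb₂range : ∀ y, 0 ≤ b₂ y ∧ b₂ y ≤ 1 := by
    intro y
    constructor
    · have := hm_le y; simp only [hb₂]; linarith
    · have := hb₁ub y; simp only [hb₂]; linarith
  have hab₃ : ∀ x y, a₂ x - b₂ y ≤ c x y := by
    intro x y
    have := hab₂ x y
    simp only [ha₂, hb₂]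
    linarith
  have hobj₂ : ε < (∑ x, μ x * a₂ x) - (∑ y, ν y * b₂ y) := by
    have e1 : (∑ x, μ x * a₂ x) = (∑ x, μ x * a₁ x) - m := by
      simp only [ha₂, mul_sub]
      rw [Finset.sum_sub_distrib, ← Finset.sum_mul, hμ1, one_mul]
    have e2 : (∑ y, ν y * b₂ y) = (∑ y, ν y * b₁ y) - m := by
      simp only [hb₂, mul_sub]
      rw [Finset.sum_sub_distrib, ← Finset.sum_mul, hν1, one_mul]
    have e3 : (∑ x, μ x * a x) ≤ ∑ x, μ x * a₁ x :=
      Finset.sum_le_sum (fun x _ => mul_le_mul_of_nonneg_left (ha₁ge x) (hμ0 x))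
    have e4 : (∑ y, ν y * b₁ y) ≤ ∑ y, ν y * b y :=
      Finset.sum_le_sum (fun y _ => mul_le_mul_of_nonneg_left (hb₁le y) (hν0 y))
    rw [e1, e2]
    linarith
  -- layer cake: find a good threshold
  have key : ∃ t : ℝ, 0 ≤ t ∧ t < 1 ∧
      ε < (∑ x, if t < a₂ x then μ x else 0) - (∑ y, if t < b₂ y then ν y else 0) := by
    by_contra hcon
    push_neg at hcon
    -- then the integral of the level function is ≤ ε, contradiction
    set φ : ℝ → ℝ := fun t => (∑ x, μ x * (if t < a₂ x then 1 else 0))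
      - (∑ y, ν y * (if t < b₂ y then 1 else 0)) with hφdef
    have hφint1 : IntegrableOn (fun t => ∑ x, μ x * (if t < a₂ x then (1:ℝ) else 0))
        (Set.Ioc (0:ℝ) 1) := by
      apply MeasureTheory.integrable_finset_sum
      intro x _
      exact (integrable_ite_lt (a₂ x)).const_mul (μ x)
    have hφint2 : IntegrableOn (fun t => ∑ y, ν y * (if t < b₂ y then (1:ℝ) else 0))
        (Set.Ioc (0:ℝ) 1) := by
      apply MeasureTheory.integrable_finset_sum
      intro y _
      exact (integrable_ite_lt (b₂ y)).const_mul (ν y)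
    have hφint : IntegrableOn φ (Set.Ioc (0:ℝ) 1) := hφint1.sub hφint2
    have hInt : ∫ t in Set.Ioc (0:ℝ) 1, φ t
        = (∑ x, μ x * a₂ x) - (∑ y, ν y * b₂ y) := by
      rw [hφdef]
      rw [MeasureTheory.integral_sub hφint1 hφint2]
      congr 1
      · rw [MeasureTheory.integral_finset_sum]
        · apply Finset.sum_congr rfl
          intro x _
          rw [MeasureTheory.integral_const_mul, integral_ite_lt (ha₂range x).1 (ha₂range x).2]
        · intro x _
          exact (integrable_ite_lt (a₂ x)).const_mul (μ x)
      · rw [MeasureTheory.integral_finset_sum]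
        · apply Finset.sum_congr rfl
          intro y _
          rw [MeasureTheory.integral_const_mul, integral_ite_lt (hb₂range y).1 (hb₂range y).2]
        · intro y _
          exact (integrable_ite_lt (b₂ y)).const_mul (ν y)
    have hbound : ∀ t ∈ Set.Ioc (0:ℝ) 1, φ t ≤ ε := by
      intro t ht
      rcases lt_or_ge t 1 with h | h
      · have := hcon t (le_of_lt ht.1) h
        rw [hφdef]
        simp only
        have e1 : (∑ x, μ x * (if t < a₂ x then (1:ℝ) else 0))
            = ∑ x, (if t < a₂ x then μ x else 0) := by
          apply Finset.sum_congr rfl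
          intro x _
          by_cases hc : t < a₂ x <;> simp [hc]
        have e2 : (∑ y, ν y * (if t < b₂ y then (1:ℝ) else 0))
            = ∑ y, (if t < b₂ y then ν y else 0) := by
          apply Finset.sum_congr rfl
          intro y _
          by_cases hc : t < b₂ y <;> simp [hc]
        rw [e1, e2]
        exact this
      · -- t = 1 (or more): first sum is 0
        have e1 : (∑ x, μ x * (if t < a₂ x then (1:ℝ) else 0)) = 0 := by
          apply Finset.sum_eq_zero
          intro x _
          have : ¬ t < a₂ x := not_lt.2 (le_trans (ha₂range x).2 h)
          simp [this]
        have e2 : 0 ≤ (∑ y, ν y * (if t < b₂ y then (1:ℝ) else 0)) := by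
          apply Finset.sum_nonneg
          intro y _
          by_cases hc : t < b₂ y <;> simp [hc, hν0 y]
        rw [hφdef]
        simp only
        rw [e1]
        linarith
    have hle : ∫ t in Set.Ioc (0:ℝ) 1, φ t ≤ ∫ _t in Set.Ioc (0:ℝ) 1, ε := by
      apply MeasureTheory.setIntegral_mono_on hφint _ measurableSet_Ioc hbound
      exact MeasureTheory.integrableOn_const (by rw [Real.volume_Ioc]; exact ENNReal.ofReal_ne_top)
    rw [hInt] at hle
    rw [MeasureTheory.setIntegral_const, MeasureTheory.measureReal_def, Real.volume_Ioc, smul_eq_mul,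
      ENNReal.toReal_ofReal (by norm_num)] at hle
    norm_num at hle
    linarith
  obtain ⟨t, ht0, ht1, hkey⟩ := key
  refine ⟨Finset.univ.filter (fun x => t < a₂ x), Finset.univ.filter (fun y => t < b₂ y), ?_, ?_⟩
  · intro x hx y hcy
    rw [Finset.mem_filter] at hx ⊢
    refine ⟨Finset.mem_univ y, ?_⟩
    have h1 := hab₃ x y
    rw [hcy] at h1
    have := hx.2
    linarith
  · rw [Finset.sum_filter, Finset.sum_filter]
    exact hkey

end Cut

section Main
variable {X Y : Type*} [Fintype X] [Fintype Y]

lemma pair_of_cut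
    (r : X → Y → ℝ) (hr : ∀ x y, r x y ∈ Set.Icc (0:ℝ) 1)
    (μ : X → ℝ) (hμ0 : ∀ x, 0 ≤ μ x) (hμ1 : ∑ x, μ x = 1)
    (ν : Y → ℝ) (hν0 : ∀ y, 0 ≤ ν y) (hν1 : ∑ y, ν y = 1)
    (ε : ℝ) (hε : 0 < ε) (S : Finset X) (N : Finset Y)
    (hSN : ∀ x ∈ S, ∀ y, y ∉ N → ε < r x y)
    (hcut : ε < (∑ x ∈ S, μ x) - (∑ y ∈ N, ν y)) :
    ∃ f : X → ℝ, ∃ g : Y → ℝ,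
      (∀ x, f x ∈ Set.Icc (0:ℝ) 1) ∧ (∀ y, g y ∈ Set.Icc (0:ℝ) 1) ∧
      (∀ x y, g y - f x ≤ r x y) ∧
      max 0 (lam g ν - lam f μ) = ε := by
  classical
  set mS : ℝ := ∑ x ∈ S, μ x with hmS
  set nN : ℝ := ∑ y ∈ N, ν y with hnN
  have hnN0 : 0 ≤ nN := Finset.sum_nonneg (fun y _ => hν0 y)
  have hmS1 : mS ≤ 1 := by
    rw [hmS, ← hμ1]
    exact Finset.sum_le_sum_of_subset_of_nonneg (Finset.subset_univ S)
      (fun x _ _ => hμ0 x)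
  have hεmS : ε < mS := by linarith
  set cc : ℝ := 1 - mS with hcc
  have hcc0 : 0 ≤ cc := by linarith
  have hcc1 : cc + ε < 1 := by linarith
  set f : X → ℝ := fun x => if x ∈ S then cc else cc + ε with hfdef
  set g : Y → ℝ := fun y => if y ∈ N then cc else cc + ε with hgdef
  have hfval : ∀ x, f x = cc ∨ f x = cc + ε := by
    intro x
    rw [hfdef]
    by_cases hx : x ∈ S <;> simp [hx]
  have hgval : ∀ y, g y = cc ∨ g y = cc + ε := by
    intro y
    rw [hgdef]
    by_cases hy : y ∈ N <;> simp [hy]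
  have hf01 : ∀ x, f x ∈ Set.Icc (0:ℝ) 1 := by
    intro x
    rcases hfval x with h | h <;> rw [h] <;> constructor <;> linarith
  have hg01 : ∀ y, g y ∈ Set.Icc (0:ℝ) 1 := by
    intro y
    rcases hgval y with h | h <;> rw [h] <;> constructor <;> linarith
  have hnonexp : ∀ x y, g y - f x ≤ r x y := by
    intro x y
    have hr0 := (hr x y).1
    by_cases hy : y ∈ N
    · have hgy : g y = cc := by rw [hgdef]; simp [hy]
      rcases hfval x with h | h <;> rw [hgy, h] <;> linarith
    · have hgy : g y = cc + ε := by rw [hgdef]; simp [hy]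
      by_cases hx : x ∈ S
      · have hfx : f x = cc := by rw [hfdef]; simp [hx]
        have := hSN x hx y hy
        rw [hgy, hfx]
        linarith
      · have hfx : f x = cc + ε := by rw [hfdef]; simp [hx]
        rw [hgy, hfx]
        linarith
  have hf1 : ∀ x, f x ≤ 1 := fun x => (hf01 x).2
  have hg1 : ∀ y, g y ≤ 1 := fun y => (hg01 y).2
  -- lam f μ = cc
  have hlamf : lam f μ = cc := by
    apply le_antisymm
    · apply lam_le
      refine ⟨hcc0, ?_⟩
      have e : ∀ x, (if cc < f x then μ x else 0) = μ x - (if x ∈ S then μ x else 0) := by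
        intro x
        by_cases hx : x ∈ S
        · have hfx : f x = cc := by rw [hfdef]; simp [hx]
          rw [hfx, if_neg (lt_irrefl cc), if_pos hx]
          ring
        · have hfx : f x = cc + ε := by rw [hfdef]; simp [hx]
          rw [hfx, if_pos (by linarith : cc < cc + ε), if_neg hx]
          ring
      rw [Finset.sum_congr rfl (fun x _ => e x), Finset.sum_sub_distrib, hμ1,
        Finset.sum_ite_mem, Finset.univ_inter]
    · apply le_lam hf1
      intro δ hδ
      by_contra hcon
      push_neg at hcon
      have hall : ∀ x, (if δ < f x then μ x else 0) = μ x := by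
        intro x
        have : δ < f x := by
          rcases hfval x with h | h <;> rw [h] <;> linarith
        rw [if_pos this]
      have := hδ.2
      rw [Finset.sum_congr rfl (fun x _ => hall x), hμ1] at this
      have hcc1' : cc ≤ 1 := by linarith
      linarith
  -- lam g ν = cc + ε
  have hlamg : lam g ν = cc + ε := by
    apply le_antisymm
    · apply lam_le
      refine ⟨by linarith, ?_⟩
      have e : ∀ y, (if cc + ε < g y then ν y else 0) = 0 := by
        intro y
        rcases hgval y with h | h <;> rw [h]
        · rw [if_neg (by linarith : ¬ cc + ε < cc)]
        · rw [if_neg (lt_irrefl (cc + ε))]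
      rw [Finset.sum_congr rfl (fun y _ => e y), Finset.sum_const_zero]
      linarith
    · apply le_lam hg1
      intro δ hδ
      by_contra hcon
      push_neg at hcon
      have hge : ∀ y, (if y ∈ N then (0:ℝ) else ν y) ≤ (if δ < g y then ν y else 0) := by
        intro y
        by_cases hy : y ∈ N
        · rw [if_pos hy]
          by_cases hc : δ < g y
          · rw [if_pos hc]; exact hν0 y
          · rw [if_neg hc]
        · have hgy : g y = cc + ε := by rw [hgdef]; simp [hy]
          rw [if_neg hy, if_pos (by rw [hgy]; linarith)]
      have h1 : (∑ y, if y ∈ N then (0:ℝ) else ν y) = 1 - nN := by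
        have e : ∀ y, (if y ∈ N then (0:ℝ) else ν y) = ν y - (if y ∈ N then ν y else 0) := by
          intro y
          by_cases hy : y ∈ N <;> simp [hy]
        rw [Finset.sum_congr rfl (fun y _ => e y), Finset.sum_sub_distrib, hν1,
          Finset.sum_ite_mem, Finset.univ_inter, ← hnN]
      have h2 : (1:ℝ) - nN ≤ ∑ y, (if δ < g y then ν y else 0) := by
        rw [← h1]
        exact Finset.sum_le_sum (fun y _ => hge y)
      have := hδ.2
      linarith
  refine ⟨f, g, hf01, hg01, hnonexp, ?_⟩
  rw [hlamf, hlamg]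
  simp [hε.le]

end Main

theorem levy_prokhorov_duality_relational {X Y : Type*} [Fintype X] [Fintype Y]
    (r : X → Y → ℝ) (hr : ∀ x y, r x y ∈ Set.Icc (0:ℝ) 1)
    (μ : X → ℝ) (hμ0 : ∀ x, 0 ≤ μ x) (hμ1 : ∑ x, μ x = 1)
    (ν : Y → ℝ) (hν0 : ∀ y, 0 ≤ ν y) (hν1 : ∑ y, ν y = 1) :
    sInf {v : ℝ | ∃ ρ : X × Y → ℝ, (∀ p, 0 ≤ ρ p) ∧
        (∀ x, ∑ y, ρ (x, y) = μ x) ∧ (∀ y, ∑ x, ρ (x, y) = ν y) ∧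
        v = lam (fun p : X × Y => r p.1 p.2) ρ} =
    sSup {v : ℝ | ∃ f : X → ℝ, ∃ g : Y → ℝ,
        (∀ x, f x ∈ Set.Icc (0:ℝ) 1) ∧ (∀ y, g y ∈ Set.Icc (0:ℝ) 1) ∧
        (∀ x y, g y - f x ≤ r x y) ∧
        v = max 0 (lam g ν - lam f μ)} := by
  classical
  have hXne : Nonempty X := by
    rcases isEmpty_or_nonempty X with hE | hN
    · exfalso
      rw [Finset.univ_eq_empty, Finset.sum_empty] at hμ1
      norm_num at hμ1
    · exact hN
  have hYne : Nonempty Y := by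
    rcases isEmpty_or_nonempty Y with hE | hN
    · exfalso
      rw [Finset.univ_eq_empty, Finset.sum_empty] at hν1
      norm_num at hν1
    · exact hN
  have hr1 : ∀ p : X × Y, r p.1 p.2 ≤ 1 := fun p => (hr p.1 p.2).2
  set CS : Set ℝ := {v : ℝ | ∃ ρ : X × Y → ℝ, (∀ p, 0 ≤ ρ p) ∧
      (∀ x, ∑ y, ρ (x, y) = μ x) ∧ (∀ y, ∑ x, ρ (x, y) = ν y) ∧
      v = lam (fun p : X × Y => r p.1 p.2) ρ} with hCS
  set PS : Set ℝ := {v : ℝ | ∃ f : X → ℝ, ∃ g : Y → ℝ,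
      (∀ x, f x ∈ Set.Icc (0:ℝ) 1) ∧ (∀ y, g y ∈ Set.Icc (0:ℝ) 1) ∧
      (∀ x y, g y - f x ≤ r x y) ∧
      v = max 0 (lam g ν - lam f μ)} with hPS
  -- nonemptiness and bounds
  have hCne : CS.Nonempty := by
    refine ⟨lam (fun p : X × Y => r p.1 p.2) (fun p => μ p.1 * ν p.2),
      fun p => μ p.1 * ν p.2, ?_, ?_, ?_, rfl⟩
    · exact fun p => mul_nonneg (hμ0 p.1) (hν0 p.2)
    · intro x
      dsimp only
      rw [← Finset.mul_sum, hν1, mul_one]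
    · intro y
      dsimp only
      rw [← Finset.sum_mul, hμ1, one_mul]
  have hCbdd : BddBelow CS := by
    refine ⟨0, ?_⟩
    rintro v ⟨ρ, hρ0, hmx, hmy, rfl⟩
    exact lam_nonneg hr1
  have hPmem0 : (0:ℝ) ∈ PS := by
    refine ⟨fun _ => 0, fun _ => 0, fun x => ⟨le_rfl, zero_le_one⟩,
      fun y => ⟨le_rfl, zero_le_one⟩, fun x y => by simpa using (hr x y).1, ?_⟩
    have h1 : lam (fun _ : Y => (0:ℝ)) ν = 0 := by
      apply le_antisymm
      · apply lam_le
        refine ⟨le_rfl, ?_⟩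
        simp
      · exact lam_nonneg (fun _ => zero_le_one)
    have h2 : lam (fun _ : X => (0:ℝ)) μ = 0 := by
      apply le_antisymm
      · apply lam_le
        refine ⟨le_rfl, ?_⟩
        simp
      · exact lam_nonneg (fun _ => zero_le_one)
    rw [h1, h2]
    norm_num
  have hPne : PS.Nonempty := ⟨0, hPmem0⟩
  have hPbdd : BddAbove PS := by
    refine ⟨1, ?_⟩
    rintro v ⟨f, g, hf, hg, hne, rfl⟩
    apply max_le zero_le_one
    have h1 : lam g ν ≤ 1 := lam_le_one (fun y => (hg y).2)
    have h2 : 0 ≤ lam f μ := lam_nonneg (fun x => (hf x).2)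
    linarith
  apply le_antisymm
  · -- hard direction: sInf ≤ sSup
    by_contra hlt
    push_neg at hlt
    obtain ⟨ε, hε1, hε2⟩ := exists_between hlt
    have hK0 : (0:ℝ) ≤ sSup PS := le_csSup hPbdd hPmem0
    have hε0 : 0 < ε := lt_of_le_of_lt hK0 hε1
    set c : X → Y → ℝ := fun x y => if ε < r x y then (1:ℝ) else 0 with hc
    have hc0 : ∀ x y, 0 ≤ c x y := by
      intro x y
      rw [hc]
      dsimp only
      split <;> norm_num
    have hc1 : ∀ x y, c x y ≤ 1 := by
      intro x y
      rw [hc]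
      dsimp only
      split <;> norm_num
    have hno : ∀ ρ : X × Y → ℝ, (∀ p, 0 ≤ ρ p) → (∀ x, ∑ y, ρ (x, y) = μ x) →
        (∀ y, ∑ x, ρ (x, y) = ν y) → ¬ (∑ p : X × Y, ρ p * c p.1 p.2 ≤ ε) := by
      intro ρ hρ0 hmx hmy hsum
      have he : (∑ p : X × Y, ρ p * c p.1 p.2)
          = ∑ p : X × Y, (if ε < r p.1 p.2 then ρ p else 0) := by
        apply Finset.sum_congr rfl
        intro p _
        rw [hc]
        dsimp only
        by_cases hp : ε < r p.1 p.2 <;> simp [hp]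
      rw [he] at hsum
      have hmem : ε ∈ lamSet (fun p : X × Y => r p.1 p.2) ρ := ⟨hε0.le, hsum⟩
      have h1 : lam (fun p : X × Y => r p.1 p.2) ρ ≤ ε := lam_le hmem
      have h2 : sInf CS ≤ lam (fun p : X × Y => r p.1 p.2) ρ :=
        csInf_le hCbdd ⟨ρ, hρ0, hmx, hmy, rfl⟩
      linarith
    obtain ⟨S, N, hSN, hcut⟩ := strassen_cut c hc0 hc1 μ ν ε hε0.le hno hμ0 hμ1 hν0 hν1
    have hSN' : ∀ x ∈ S, ∀ y, y ∉ N → ε < r x y := by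
      intro x hx y hy
      by_contra hcon
      push_neg at hcon
      apply hy
      apply hSN x hx y
      rw [hc]
      dsimp only
      rw [if_neg (not_lt.2 hcon)]
    obtain ⟨f, g, hf, hg, hne, hval⟩ :=
      pair_of_cut r hr μ hμ0 hμ1 ν hν0 hν1 ε hε0 S N hSN' hcut
    have : ε ∈ PS := ⟨f, g, hf, hg, hne, hval.symm⟩
    have := le_csSup hPbdd this
    linarith
  · -- easy direction: sSup ≤ sInf (weak duality)
    apply le_csInf hCne
    rintro w ⟨ρ, hρ0, hmx, hmy, rfl⟩
    apply csSup_le hPne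
    rintro v ⟨f, g, hf, hg, hne, rfl⟩
    exact weak_duality r hr μ ν ρ hρ0 hmx hmy f g hf hg hne
end

section
/- Kantorovich-Rubinstein duality for the convex powerset (finite case): let (X,d) be a finite 1-bounded pseudometric space and let A, B be nonempty convex sets of probability distributions on X. Then max( sup_{μ∈A} inf_{ν∈B} W(μ,ν), sup_{ν∈B} inf_{μ∈A} W(μ,ν) ) = sup { | sup_{ν∈B} E_ν[f] − sup_{μ∈A} E_μ[f] | : f: X → [0,1] nonexpansive }, where W(μ,ν) = sup { E_ν[f] − E_μ[f] : f: X → [0,1] nonexpansive } is the Kantorovich-Wasserstein distance and E_μ[f] = Σ_x μ(x) f(x). -/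
set_option linter.unusedSectionVars false
set_option linter.unusedVariables false

/-- Expected value of `f` under the distribution `μ` on a finite type. -/
noncomputable def expec {X : Type*} [Fintype X] (μ : X → ℝ) (f : X → ℝ) : ℝ :=
  ∑ x, μ x * f x

/-- Nonexpansive `[0,1]`-valued functions on `(X, d)`. -/
def Nonexp {X : Type*} (d : X → X → ℝ) (f : X → ℝ) : Prop :=
  (∀ x, f x ∈ Set.Icc (0:ℝ) 1) ∧ ∀ x y, |f x - f y| ≤ d x y

/-- The Kantorovich-Wasserstein distance on distributions over a finite space. -/
noncomputable def wassDist {X : Type*} [Fintype X] (d : X → X → ℝ) (μ ν : X → ℝ) : ℝ :=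
  sSup {v : ℝ | ∃ f : X → ℝ, Nonexp d f ∧ v = expec ν f - expec μ f}

/-- `IsDist μ` : `μ` is a probability distribution on the finite type `X`. -/
def IsDist {X : Type*} [Fintype X] (μ : X → ℝ) : Prop :=
  (∀ x, 0 ≤ μ x) ∧ ∑ x, μ x = 1

section Aux
variable {X : Type*} [Fintype X] {d : X → X → ℝ} {μ ν f : X → ℝ}

lemma expec_nonneg (hμ : IsDist μ) (hf : Nonexp d f) : 0 ≤ expec μ f :=
  Finset.sum_nonneg fun x _ => mul_nonneg (hμ.1 x) (hf.1 x).1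

lemma expec_le_one (hμ : IsDist μ) (hf : Nonexp d f) : expec μ f ≤ 1 := by
  calc expec μ f ≤ ∑ x, μ x := Finset.sum_le_sum fun x _ =>
        (mul_le_of_le_one_right (hμ.1 x) (hf.1 x).2)
  _ = 1 := hμ.2

lemma nonexp_zero (hd : ∀ x y, 0 ≤ d x y) : Nonexp d (fun _ => (0:ℝ)) :=
  ⟨fun _ => by constructor <;> norm_num, fun x y => by simpa using hd x y⟩

lemma expec_zero : expec μ (fun _ => (0:ℝ)) = 0 := by simp [expec]

lemma nonexp_one_sub (hf : Nonexp d f) : Nonexp d (fun x => 1 - f x) := by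
  refine ⟨fun x => ⟨by simp only []; linarith [(hf.1 x).2], by simp only []; linarith [(hf.1 x).1]⟩, fun x y => ?_⟩
  have := hf.2 x y
  rw [show (1 - f x) - (1 - f y) = -(f x - f y) by ring, abs_neg]
  exact this

lemma expec_one_sub (hμ : IsDist μ) : expec μ (fun x => 1 - f x) = 1 - expec μ f := by
  simp [expec, mul_sub, Finset.sum_sub_distrib, hμ.2]

lemma wset_mem (hf : Nonexp d f) : expec ν f - expec μ f ∈
    {v : ℝ | ∃ f : X → ℝ, Nonexp d f ∧ v = expec ν f - expec μ f} := ⟨f, hf, rfl⟩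

lemma wset_nonempty (hd : ∀ x y, 0 ≤ d x y) :
    {v : ℝ | ∃ f : X → ℝ, Nonexp d f ∧ v = expec ν f - expec μ f}.Nonempty :=
  ⟨0, (fun _ => (0:ℝ)), nonexp_zero hd, by simp [expec_zero]⟩

lemma wset_bdd (hμ : IsDist μ) (hν : IsDist ν) :
    BddAbove {v : ℝ | ∃ f : X → ℝ, Nonexp d f ∧ v = expec ν f - expec μ f} := by
  refine ⟨1, fun v hv => ?_⟩
  obtain ⟨f, hf, rfl⟩ := hv
  have := expec_le_one hν hf
  have := expec_nonneg hμ hf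
  linarith

lemma wass_nonneg (hd : ∀ x y, 0 ≤ d x y) (hμ : IsDist μ) (hν : IsDist ν) :
    0 ≤ wassDist d μ ν := by
  have : (0:ℝ) ∈ {v : ℝ | ∃ f : X → ℝ, Nonexp d f ∧ v = expec ν f - expec μ f} :=
    ⟨(fun _ => (0:ℝ)), nonexp_zero hd, by simp [expec_zero]⟩
  exact le_csSup (wset_bdd hμ hν) this

lemma wass_le_one (hd : ∀ x y, 0 ≤ d x y) (hμ : IsDist μ) (hν : IsDist ν) :
    wassDist d μ ν ≤ 1 := by
  refine Real.sSup_le (fun v hv => ?_) zero_le_one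
  obtain ⟨f, hf, rfl⟩ := hv
  have := expec_le_one hν hf
  have := expec_nonneg hμ hf
  linarith

lemma wass_symm (hμ : IsDist μ) (hν : IsDist ν) :
    wassDist d μ ν = wassDist d ν μ := by
  unfold wassDist
  congr 1
  ext v
  constructor
  · rintro ⟨f, hf, rfl⟩
    exact ⟨(fun x => 1 - f x), nonexp_one_sub hf,
      by rw [expec_one_sub hμ, expec_one_sub hν]; ring⟩
  · rintro ⟨f, hf, rfl⟩
    exact ⟨(fun x => 1 - f x), nonexp_one_sub hf,
      by rw [expec_one_sub hμ, expec_one_sub hν]; ring⟩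

end Aux
section Key
variable {X : Type*} [Fintype X] {d : X → X → ℝ}

lemma expec_continuous (μ : X → ℝ) : Continuous (fun f : X → ℝ => expec μ f) := by
  unfold expec
  exact continuous_finset_sum _ fun x _ => (continuous_const.mul (continuous_apply x))

lemma nonexp_isCompact (d : X → X → ℝ) : IsCompact {f : X → ℝ | Nonexp d f} := by
  have hsub : {f : X → ℝ | Nonexp d f} ⊆ Set.pi Set.univ (fun _ : X => Set.Icc (0:ℝ) 1) := by
    intro f hf x _
    exact hf.1 x
  have hcpt : IsCompact (Set.pi Set.univ (fun _ : X => Set.Icc (0:ℝ) 1)) :=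
    isCompact_univ_pi fun _ => isCompact_Icc
  refine hcpt.of_isClosed_subset ?_ hsub
  have h1 : IsClosed (⋂ x : X, {f : X → ℝ | f x ∈ Set.Icc (0:ℝ) 1}) :=
    isClosed_iInter fun x => (isClosed_Icc).preimage (continuous_apply x)
  have h2 : IsClosed (⋂ x : X, ⋂ y : X, {f : X → ℝ | |f x - f y| ≤ d x y}) := by
    refine isClosed_iInter fun x => isClosed_iInter fun y => ?_
    have : Continuous (fun f : X → ℝ => |f x - f y|) :=
      ((continuous_apply x).sub (continuous_apply y)).abs
    exact isClosed_le this continuous_const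
  convert h1.inter h2 using 1
  ext f
  simp only [Set.mem_setOf_eq, Nonexp, Set.mem_inter_iff, Set.mem_iInter]

lemma nonexp_convex (d : X → X → ℝ) : Convex ℝ {f : X → ℝ | Nonexp d f} := by
  intro f hf g hg a b ha hb hab
  constructor
  · intro x
    have h1 := (hf.1 x); have h2 := (hg.1 x)
    constructor
    · have : (0:ℝ) ≤ a * f x + b * g x :=
        add_nonneg (mul_nonneg ha h1.1) (mul_nonneg hb h2.1)
      simpa [Pi.add_apply, Pi.smul_apply, smul_eq_mul] using this
    · have : a * f x + b * g x ≤ a * 1 + b * 1 :=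
        add_le_add (mul_le_mul_of_nonneg_left h1.2 ha) (mul_le_mul_of_nonneg_left h2.2 hb)
      simp only [Pi.add_apply, Pi.smul_apply, smul_eq_mul]
      linarith
  · intro x y
    have h1 := hf.2 x y; have h2 := hg.2 x y
    have : |(a * f x + b * g x) - (a * f y + b * g y)| ≤ a * |f x - f y| + b * |g x - g y| := by
      rw [show (a * f x + b * g x) - (a * f y + b * g y) = a * (f x - f y) + b * (g x - g y) by ring]
      calc |a * (f x - f y) + b * (g x - g y)| ≤ |a * (f x - f y)| + |b * (g x - g y)| :=
            abs_add_le _ _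
      _ = a * |f x - f y| + b * |g x - g y| := by
            rw [abs_mul, abs_mul, abs_of_nonneg ha, abs_of_nonneg hb]
    simp only [Pi.add_apply, Pi.smul_apply, smul_eq_mul]
    calc |(a * f x + b * g x) - (a * f y + b * g y)| ≤ a * |f x - f y| + b * |g x - g y| := this
    _ ≤ a * d x y + b * d x y :=
        add_le_add (mul_le_mul_of_nonneg_left h1 ha) (mul_le_mul_of_nonneg_left h2 hb)
    _ = d x y := by rw [← add_mul, hab, one_mul]

/-- A convex set (pairwise) is closed under finite convex combinations. -/
lemma convex_finite_combo {B : Set (X → ℝ)}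
    (hBconv : ∀ ν₁ ∈ B, ∀ ν₂ ∈ B, ∀ p : ℝ, 0 ≤ p → p ≤ 1 →
      (fun x => p * ν₁ x + (1 - p) * ν₂ x) ∈ B)
    {ι : Type*} [DecidableEq ι] (t : Finset ι) (ν : ι → (X → ℝ)) (p : ι → ℝ) :
    (∀ i ∈ t, ν i ∈ B) → (∀ i ∈ t, 0 ≤ p i) → ∑ i ∈ t, p i = 1 →
    (fun x => ∑ i ∈ t, p i * ν i x) ∈ B := by
  induction t using Finset.induction generalizing p with
  | empty => intro _ _ h; simp at h
  | insert _ _ hat ih =>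
    rename_i a t
    intro hν hp hsum
    rw [Finset.sum_insert hat] at hsum
    have hpa : 0 ≤ p a := hp a (Finset.mem_insert_self a t)
    have hrest : ∀ i ∈ t, 0 ≤ p i := fun i hi => hp i (Finset.mem_insert_of_mem hi)
    rcases eq_or_lt_of_le (Finset.sum_nonneg hrest) with h0 | hpos
    · -- sum over t is 0, so all p i = 0 on t, function is p a * ν a = ν a
      have hpa1 : p a = 1 := by linarith
      have hzero : ∀ i ∈ t, p i = 0 :=
        (Finset.sum_eq_zero_iff_of_nonneg hrest).1 h0.symm
      have : (fun x => ∑ i ∈ insert a t, p i * ν i x) = ν a := by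
        funext x
        rw [Finset.sum_insert hat, hpa1, one_mul]
        rw [Finset.sum_eq_zero fun i hi => by rw [hzero i hi, zero_mul], add_zero]
      rw [this]
      exact hν a (Finset.mem_insert_self a t)
    · -- s > 0
      have hts : ∀ i ∈ t, ν i ∈ B := fun i hi => hν i (Finset.mem_insert_of_mem hi)
      have hcomb : (fun x => ∑ i ∈ t, (p i / (∑ j ∈ t, p j)) * ν i x) ∈ B := by
        refine ih _ hts (fun i hi => div_nonneg (hrest i hi) hpos.le) ?_
        rw [← Finset.sum_div, div_self (ne_of_gt hpos)]
      have hmem := hBconv (ν a) (hν a (Finset.mem_insert_self a t)) _ hcomb (p a) hpa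
        (by linarith)
      have heq : (fun x => p a * ν a x + (1 - p a) * ∑ i ∈ t, (p i / (∑ j ∈ t, p j)) * ν i x)
          = (fun x => ∑ i ∈ insert a t, p i * ν i x) := by
        funext x
        rw [Finset.sum_insert hat]
        have h1s : 1 - p a = (∑ j ∈ t, p j) := by linarith
        rw [h1s, Finset.mul_sum]
        congr 1
        refine Finset.sum_congr rfl fun i hi => ?_
        field_simp
      rw [← heq]
      exact hmem

end Key
section Minimax
variable {X : Type*} [Fintype X]

lemma expec_add (μ f g : X → ℝ) : expec μ (f + g) = expec μ f + expec μ g := by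
  simp [expec, mul_add, Finset.sum_add_distrib]

lemma expec_smul (μ f : X → ℝ) (c : ℝ) : expec μ (c • f) = c * expec μ f := by
  simp [expec, Finset.mul_sum, mul_left_comm]

lemma key_minimax (d : X → X → ℝ) (hd : ∀ x y, 0 ≤ d x y)
    (B : Set (X → ℝ)) (hB : ∀ ν ∈ B, IsDist ν)
    (hBconv : ∀ ν₁ ∈ B, ∀ ν₂ ∈ B, ∀ p : ℝ, 0 ≤ p → p ≤ 1 →
      (fun x => p * ν₁ x + (1 - p) * ν₂ x) ∈ B)
    (μ : X → ℝ) (hμ : IsDist μ) (v' : ℝ)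
    (hv' : v' < sInf {w : ℝ | ∃ ν ∈ B, w = wassDist d μ ν}) :
    ∃ g : X → ℝ, Nonexp d g ∧ ∀ ν ∈ B, v' ≤ expec ν g - expec μ g := by
  classical
  rcases lt_or_ge v' 0 with hneg | hv0
  · exact ⟨(fun _ => (0:ℝ)), nonexp_zero hd, fun ν hν => by
      rw [expec_zero, expec_zero]; linarith⟩
  by_contra hcon
  push_neg at hcon
  -- open cover of the compact convex set of nonexpansive functions
  have hcover : {f : X → ℝ | Nonexp d f} ⊆
      ⋃ ν : ↑B, {f : X → ℝ | expec ν.1 f - expec μ f < v'} := by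
    intro f hf
    obtain ⟨ν, hνB, hlt⟩ := hcon f hf
    exact Set.mem_iUnion.2 ⟨⟨ν, hνB⟩, hlt⟩
  obtain ⟨t, ht⟩ := (nonexp_isCompact d).elim_finite_subcover
    (fun ν : ↑B => {f : X → ℝ | expec ν.1 f - expec μ f < v'})
    (fun ν => isOpen_lt ((expec_continuous ν.1).sub (expec_continuous μ)) continuous_const)
    hcover
  -- the linear image of N in ℝ^t
  set Φ : (X → ℝ) → (↑t → ℝ) := fun f i => expec i.1.1 f - expec μ f with hΦ
  have hΦlin : IsLinearMap ℝ Φ :=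
    ⟨fun f g => by funext i; simp only [hΦ, expec_add, Pi.add_apply]; ring,
     fun c f => by funext i; simp only [hΦ, expec_smul, Pi.smul_apply, smul_eq_mul]; ring⟩
  have hΦcont : Continuous Φ :=
    continuous_pi fun i => (expec_continuous i.1.1).sub (expec_continuous μ)
  set M : Set (↑t → ℝ) := Φ '' {f | Nonexp d f} with hM
  have hMconv : Convex ℝ M := (nonexp_convex d).is_linear_image hΦlin
  have hMcpt : IsCompact M := (nonexp_isCompact d).image hΦcont
  set Q : Set (↑t → ℝ) := Set.univ.pi (fun _ : ↑t => Set.Ici v') with hQdef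
  have hQconv : Convex ℝ Q := convex_pi fun i _ => convex_Ici v'
  have hQclosed : IsClosed Q := isClosed_set_pi fun i _ => isClosed_Ici
  have hdisj : Disjoint M Q := by
    rw [Set.disjoint_left]
    rintro z ⟨f, hfN, rfl⟩ hzQ
    obtain ⟨i, hit, hfi⟩ := Set.mem_iUnion₂.1 (ht hfN)
    have h1 : v' ≤ Φ f ⟨i, hit⟩ := hzQ ⟨i, hit⟩ (Set.mem_univ _)
    have h2 : Φ f ⟨i, hit⟩ < v' := hfi
    linarith
  obtain ⟨φ, u, w, hMu, huw, hQw⟩ :=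
    geometric_hahn_banach_compact_closed hMconv hMcpt hQconv hQclosed hdisj
  -- coordinates of φ
  set lam : ↑t → ℝ := fun i => φ (fun j => if i = j then 1 else 0) with hlam
  have hrep : ∀ z : ↑t → ℝ, φ z = ∑ i, z i * lam i := by
    intro z
    conv_lhs => rw [pi_eq_sum_univ z]
    rw [map_sum]
    refine Finset.sum_congr rfl fun i _ => ?_
    rw [map_smul, smul_eq_mul, hlam]
  have hconstQ : (fun _ : ↑t => v') ∈ Q := fun j _ => le_refl v'
  have hφc : w < φ (fun _ => v') := hQw _ hconstQ
  -- nonnegativity of the coordinates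
  have hlam0 : ∀ i, 0 ≤ lam i := by
    intro i
    by_contra hni
    push_neg at hni
    set c : ℝ := (φ (fun _ => v') - w + 1) / (-lam i) with hc
    have hcpos : 0 < c := div_pos (by linarith) (by linarith)
    have hqQ : (fun j => if i = j then v' + c else v') ∈ Q := by
      intro j _
      by_cases hij : i = j <;> simp only [hij, if_true, if_false, Set.mem_Ici] <;> linarith
    have hdecomp : (fun j => if i = j then v' + c else v')
        = (fun _ : ↑t => v') + c • (fun j => if i = j then (1:ℝ) else 0) := by
      funext j
      by_cases hij : i = j <;> simp [hij]
    have hval : φ (fun j => if i = j then v' + c else v')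
        = φ (fun _ => v') + c * lam i := by
      rw [hdecomp, map_add, map_smul, smul_eq_mul, hlam]
    have hne : lam i ≠ 0 := ne_of_lt hni
    have hclam : c * lam i = -(φ (fun _ => v') - w + 1) := by
      rw [hc]
      rw [div_mul_eq_mul_div, div_neg, mul_comm]
      rw [mul_div_cancel_left₀ _ hne]
    have := hQw _ hqQ
    rw [hval, hclam] at this
    linarith
  -- positivity of the total mass
  have hupos : 0 < u := by
    have h0N : (fun _ : X => (0:ℝ)) ∈ {f : X → ℝ | Nonexp d f} := nonexp_zero hd
    have h0M : Φ (fun _ => (0:ℝ)) ∈ M := ⟨_, h0N, rfl⟩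
    have hΦ0 : Φ (fun _ : X => (0:ℝ)) = (fun _ : ↑t => (0:ℝ)) := by
      funext i
      simp only [hΦ]
      rw [expec_zero, expec_zero, sub_zero]
    have hφ0 : φ (fun _ : ↑t => (0:ℝ)) = 0 := by
      rw [hrep]
      simp
    have := hMu _ h0M
    rw [hΦ0, hφ0] at this
    exact this
  have hφconst : φ (fun _ : ↑t => v') = v' * ∑ i, lam i := by
    rw [hrep, Finset.mul_sum]
  have hsnonneg : 0 ≤ ∑ i, lam i := Finset.sum_nonneg fun i _ => hlam0 i
  have hspos : 0 < ∑ i, lam i := by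
    rcases hsnonneg.lt_or_eq with h | h
    · exact h
    · exfalso
      rw [← h, mul_zero] at hφconst
      linarith
  -- the witnessing convex combination in B
  set νs : X → ℝ := fun x => ∑ i : ↑t, (lam i / (∑ j, lam j)) * i.1.1 x with hνs
  have hνsB : νs ∈ B := by
    refine convex_finite_combo hBconv Finset.univ (fun i : ↑t => i.1.1)
      (fun i : ↑t => lam i / (∑ j, lam j)) (fun i _ => i.1.2)
      (fun i _ => div_nonneg (hlam0 i) hsnonneg) ?_
    rw [← Finset.sum_div, div_self (ne_of_gt hspos)]
  have hwle : wassDist d μ νs ≤ v' := by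
    refine Real.sSup_le ?_ hv0
    rintro v ⟨f, hf, rfl⟩
    have hexp : expec νs f = ∑ i : ↑t, (lam i / (∑ j, lam j)) * expec i.1.1 f := by
      rw [expec]
      simp only [hνs, Finset.sum_mul]
      rw [Finset.sum_comm]
      refine Finset.sum_congr rfl fun i _ => ?_
      rw [expec, Finset.mul_sum]
      exact Finset.sum_congr rfl fun x _ => by ring
    have hone : ∑ i : ↑t, (lam i / (∑ j, lam j)) = 1 := by
      rw [← Finset.sum_div, div_self (ne_of_gt hspos)]
    have hdiff : expec νs f - expec μ f
        = (∑ i : ↑t, Φ f i * lam i) / (∑ j, lam j) := by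
      rw [hexp]
      have : expec μ f = (∑ i : ↑t, (lam i / (∑ j, lam j))) * expec μ f := by
        rw [hone, one_mul]
      rw [Finset.sum_div]
      calc (∑ i : ↑t, lam i / (∑ j, lam j) * expec i.1.1 f) - expec μ f
          = ∑ i : ↑t, (lam i / (∑ j, lam j) * expec i.1.1 f
              - lam i / (∑ j, lam j) * expec μ f) := by
            rw [Finset.sum_sub_distrib]
            rw [← Finset.sum_mul, hone, one_mul]
      _ = ∑ i : ↑t, Φ f i * lam i / (∑ j, lam j) := by
            refine Finset.sum_congr rfl fun i _ => ?_
            simp only [hΦ]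
            field_simp
    have hfM : Φ f ∈ M := ⟨f, hf, rfl⟩
    have hφf : φ (Φ f) < u := hMu _ hfM
    rw [hrep] at hφf
    rw [hdiff]
    rw [div_le_iff₀ hspos]
    have : u < v' * ∑ j, lam j := by rw [← hφconst]; linarith
    linarith
  -- contradiction with the infimum hypothesis
  have hlb : BddBelow {w : ℝ | ∃ ν ∈ B, w = wassDist d μ ν} := by
    refine ⟨0, fun w hw => ?_⟩
    obtain ⟨ν, hν, rfl⟩ := hw
    exact wass_nonneg hd hμ (hB ν hν)
  have := csInf_le hlb ⟨νs, hνsB, rfl⟩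
  linarith
end Minimax
section SupFacts
variable {X : Type*} [Fintype X] {d : X → X → ℝ}

lemma sexp_bdd {C : Set (X → ℝ)} (hC : ∀ μ ∈ C, IsDist μ) {f : X → ℝ} (hf : Nonexp d f) :
    BddAbove {w : ℝ | ∃ μ ∈ C, w = expec μ f} := by
  refine ⟨1, fun w hw => ?_⟩
  obtain ⟨μ, hμ, rfl⟩ := hw
  exact expec_le_one (hC μ hμ) hf

lemma sexp_nonneg {C : Set (X → ℝ)} (hC : ∀ μ ∈ C, IsDist μ) (hCne : C.Nonempty)
    {f : X → ℝ} (hf : Nonexp d f) : 0 ≤ sSup {w : ℝ | ∃ μ ∈ C, w = expec μ f} := by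
  obtain ⟨μ₀, hμ₀⟩ := hCne
  exact le_trans (expec_nonneg (hC μ₀ hμ₀) hf) (le_csSup (sexp_bdd hC hf) ⟨μ₀, hμ₀, rfl⟩)

lemma sexp_le_one {C : Set (X → ℝ)} (hC : ∀ μ ∈ C, IsDist μ)
    {f : X → ℝ} (hf : Nonexp d f) : sSup {w : ℝ | ∃ μ ∈ C, w = expec μ f} ≤ 1 := by
  refine Real.sSup_le ?_ zero_le_one
  rintro w ⟨μ, hμ, rfl⟩
  exact expec_le_one (hC μ hμ) hf

end SupFacts

theorem convex_powerset_duality {X : Type*} [Fintype X] (d : X → X → ℝ)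
    (hbound : ∀ x y, d x y ∈ Set.Icc (0:ℝ) 1)
    (hrefl : ∀ x, d x x = 0)
    (hsymm : ∀ x y, d x y = d y x)
    (htri : ∀ x y z, d x z ≤ d x y + d y z)
    (A B : Set (X → ℝ))
    (hA : ∀ μ ∈ A, IsDist μ) (hB : ∀ ν ∈ B, IsDist ν)
    (hAne : A.Nonempty) (hBne : B.Nonempty)
    (hAconv : ∀ μ₁ ∈ A, ∀ μ₂ ∈ A, ∀ p : ℝ, 0 ≤ p → p ≤ 1 →
      (fun x => p * μ₁ x + (1 - p) * μ₂ x) ∈ A)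
    (hBconv : ∀ ν₁ ∈ B, ∀ ν₂ ∈ B, ∀ p : ℝ, 0 ≤ p → p ≤ 1 →
      (fun x => p * ν₁ x + (1 - p) * ν₂ x) ∈ B) :
    max (sSup {v : ℝ | ∃ μ ∈ A, v = sInf {w : ℝ | ∃ ν ∈ B, w = wassDist d μ ν}})
        (sSup {v : ℝ | ∃ ν ∈ B, v = sInf {w : ℝ | ∃ μ ∈ A, w = wassDist d μ ν}}) =
    sSup {v : ℝ | ∃ f : X → ℝ, Nonexp d f ∧
        v = |sSup {w : ℝ | ∃ ν ∈ B, w = expec ν f} -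
             sSup {w : ℝ | ∃ μ ∈ A, w = expec μ f}|} := by
  have hd : ∀ x y, 0 ≤ d x y := fun x y => (hbound x y).1
  obtain ⟨μ₀, hμ₀⟩ := hAne
  obtain ⟨ν₀, hν₀⟩ := hBne
  -- the right-hand side set
  have hRmem : (0:ℝ) ∈ {v : ℝ | ∃ f : X → ℝ, Nonexp d f ∧
      v = |sSup {w : ℝ | ∃ ν ∈ B, w = expec ν f} -
           sSup {w : ℝ | ∃ μ ∈ A, w = expec μ f}|} := by
    refine ⟨(fun _ => (0:ℝ)), nonexp_zero hd, ?_⟩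
    have hBz : {w : ℝ | ∃ ν ∈ B, w = expec ν (fun _ => (0:ℝ))} = {0} := by
      ext w
      simp only [Set.mem_setOf_eq, Set.mem_singleton_iff, expec_zero]
      constructor
      · rintro ⟨ν, _, rfl⟩; rfl
      · rintro rfl; exact ⟨ν₀, hν₀, rfl⟩
    have hAz : {w : ℝ | ∃ μ ∈ A, w = expec μ (fun _ => (0:ℝ))} = {0} := by
      ext w
      simp only [Set.mem_setOf_eq, Set.mem_singleton_iff, expec_zero]
      constructor
      · rintro ⟨μ, _, rfl⟩; rfl
      · rintro rfl; exact ⟨μ₀, hμ₀, rfl⟩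
    rw [hBz, hAz, csSup_singleton, sub_self, abs_zero]
  have hRbdd : BddAbove {v : ℝ | ∃ f : X → ℝ, Nonexp d f ∧
      v = |sSup {w : ℝ | ∃ ν ∈ B, w = expec ν f} -
           sSup {w : ℝ | ∃ μ ∈ A, w = expec μ f}|} := by
    refine ⟨1, fun v hv => ?_⟩
    obtain ⟨f, hf, rfl⟩ := hv
    have h1 := sexp_nonneg hB ⟨ν₀, hν₀⟩ hf
    have h2 := sexp_le_one hB hf
    have h3 := sexp_nonneg hA ⟨μ₀, hμ₀⟩ hf
    have h4 := sexp_le_one hA hf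
    rw [abs_le]
    constructor <;> linarith
  set D : ℝ := sSup {v : ℝ | ∃ f : X → ℝ, Nonexp d f ∧
      v = |sSup {w : ℝ | ∃ ν ∈ B, w = expec ν f} -
           sSup {w : ℝ | ∃ μ ∈ A, w = expec μ f}|} with hD
  have hD0 : 0 ≤ D := le_csSup hRbdd hRmem
  -- key bound, A side
  have hkeyA : ∀ μ ∈ A, sInf {w : ℝ | ∃ ν ∈ B, w = wassDist d μ ν} ≤ D := by
    intro μ hμ
    by_contra hlt
    push_neg at hlt
    set v' : ℝ := (D + sInf {w : ℝ | ∃ ν ∈ B, w = wassDist d μ ν}) / 2 with hv'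
    have hv1 : D < v' := by rw [hv']; linarith
    have hv2 : v' < sInf {w : ℝ | ∃ ν ∈ B, w = wassDist d μ ν} := by rw [hv']; linarith
    obtain ⟨f, hf, hfall⟩ := key_minimax d hd B hB hBconv μ (hA μ hμ) v' hv2
    set g : X → ℝ := fun x => 1 - f x with hg
    have hgN : Nonexp d g := nonexp_one_sub hf
    have hgB : ∀ ν ∈ B, expec ν g ≤ expec μ g - v' := by
      intro ν hν
      have := hfall ν hν
      rw [hg, expec_one_sub (hB ν hν), expec_one_sub (hA μ hμ)]
      linarith
    have hsB : sSup {w : ℝ | ∃ ν ∈ B, w = expec ν g} ≤ expec μ g - v' := by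
      refine Real.sSup_le ?_ ?_
      · rintro w ⟨ν, hν, rfl⟩; exact hgB ν hν
      · have h0 := expec_nonneg (hB ν₀ hν₀) hgN
        have := hgB ν₀ hν₀
        linarith
    have hsA : expec μ g ≤ sSup {w : ℝ | ∃ μ' ∈ A, w = expec μ' g} :=
      le_csSup (sexp_bdd hA hgN) ⟨μ, hμ, rfl⟩
    have hmemR : |sSup {w : ℝ | ∃ ν ∈ B, w = expec ν g} -
        sSup {w : ℝ | ∃ μ' ∈ A, w = expec μ' g}| ∈
        {v : ℝ | ∃ f : X → ℝ, Nonexp d f ∧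
          v = |sSup {w : ℝ | ∃ ν ∈ B, w = expec ν f} -
               sSup {w : ℝ | ∃ μ ∈ A, w = expec μ f}|} := ⟨g, hgN, rfl⟩
    have hDD := le_csSup hRbdd hmemR
    have habs : v' ≤ |sSup {w : ℝ | ∃ ν ∈ B, w = expec ν g} -
        sSup {w : ℝ | ∃ μ' ∈ A, w = expec μ' g}| := by
      have h1 : v' ≤ sSup {w : ℝ | ∃ μ' ∈ A, w = expec μ' g} -
          sSup {w : ℝ | ∃ ν ∈ B, w = expec ν g} := by linarith
      calc v' ≤ _ := h1
      _ = -(sSup {w : ℝ | ∃ ν ∈ B, w = expec ν g} -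
          sSup {w : ℝ | ∃ μ' ∈ A, w = expec μ' g}) := by ring
      _ ≤ _ := neg_le_abs _
    linarith
  -- key bound, B side
  have hkeyB : ∀ ν ∈ B, sInf {w : ℝ | ∃ μ ∈ A, w = wassDist d μ ν} ≤ D := by
    intro ν hν
    have hset : {w : ℝ | ∃ μ ∈ A, w = wassDist d μ ν}
        = {w : ℝ | ∃ μ ∈ A, w = wassDist d ν μ} := by
      ext w
      constructor
      · rintro ⟨μ, hμ, rfl⟩; exact ⟨μ, hμ, wass_symm (hA μ hμ) (hB ν hν)⟩
      · rintro ⟨μ, hμ, rfl⟩; exact ⟨μ, hμ, (wass_symm (hA μ hμ) (hB ν hν)).symm⟩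
    rw [hset]
    by_contra hlt
    push_neg at hlt
    set v' : ℝ := (D + sInf {w : ℝ | ∃ μ ∈ A, w = wassDist d ν μ}) / 2 with hv'
    have hv1 : D < v' := by rw [hv']; linarith
    have hv2 : v' < sInf {w : ℝ | ∃ μ ∈ A, w = wassDist d ν μ} := by rw [hv']; linarith
    obtain ⟨f, hf, hfall⟩ := key_minimax d hd A hA hAconv ν (hB ν hν) v' hv2
    set g : X → ℝ := fun x => 1 - f x with hg
    have hgN : Nonexp d g := nonexp_one_sub hf
    have hgA : ∀ μ ∈ A, expec μ g ≤ expec ν g - v' := by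
      intro μ hμ
      have := hfall μ hμ
      rw [hg, expec_one_sub (hB ν hν), expec_one_sub (hA μ hμ)]
      linarith
    have hsA : sSup {w : ℝ | ∃ μ ∈ A, w = expec μ g} ≤ expec ν g - v' := by
      refine Real.sSup_le ?_ ?_
      · rintro w ⟨μ, hμ, rfl⟩; exact hgA μ hμ
      · have h0 := expec_nonneg (hA μ₀ hμ₀) hgN
        have := hgA μ₀ hμ₀
        linarith
    have hsB : expec ν g ≤ sSup {w : ℝ | ∃ ν' ∈ B, w = expec ν' g} :=
      le_csSup (sexp_bdd hB hgN) ⟨ν, hν, rfl⟩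
    have hmemR : |sSup {w : ℝ | ∃ ν' ∈ B, w = expec ν' g} -
        sSup {w : ℝ | ∃ μ ∈ A, w = expec μ g}| ∈
        {v : ℝ | ∃ f : X → ℝ, Nonexp d f ∧
          v = |sSup {w : ℝ | ∃ ν ∈ B, w = expec ν f} -
               sSup {w : ℝ | ∃ μ ∈ A, w = expec μ f}|} := ⟨g, hgN, rfl⟩
    have hDD := le_csSup hRbdd hmemR
    have habs : v' ≤ |sSup {w : ℝ | ∃ ν' ∈ B, w = expec ν' g} -
        sSup {w : ℝ | ∃ μ ∈ A, w = expec μ g}| := by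
      have h1 : v' ≤ sSup {w : ℝ | ∃ ν' ∈ B, w = expec ν' g} -
          sSup {w : ℝ | ∃ μ ∈ A, w = expec μ g} := by linarith
      exact le_trans h1 (le_abs_self _)
    linarith
  -- facts about the two left-hand sup sets
  have hwne : ∀ μ, IsDist μ → {w : ℝ | ∃ ν ∈ B, w = wassDist d μ ν}.Nonempty :=
    fun μ _ => ⟨wassDist d μ ν₀, ν₀, hν₀, rfl⟩
  have hwbb : ∀ μ, IsDist μ → BddBelow {w : ℝ | ∃ ν ∈ B, w = wassDist d μ ν} := by
    intro μ hμ
    refine ⟨0, fun w hw => ?_⟩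
    obtain ⟨ν, hν, rfl⟩ := hw
    exact wass_nonneg hd hμ (hB ν hν)
  have hwne' : ∀ ν, IsDist ν → {w : ℝ | ∃ μ ∈ A, w = wassDist d μ ν}.Nonempty :=
    fun ν _ => ⟨wassDist d μ₀ ν, μ₀, hμ₀, rfl⟩
  have hwbb' : ∀ ν, IsDist ν → BddBelow {w : ℝ | ∃ μ ∈ A, w = wassDist d μ ν} := by
    intro ν hν
    refine ⟨0, fun w hw => ?_⟩
    obtain ⟨μ, hμ, rfl⟩ := hw
    exact wass_nonneg hd (hA μ hμ) hν
  have hLAbdd : BddAbove {v : ℝ | ∃ μ ∈ A, v = sInf {w : ℝ | ∃ ν ∈ B, w = wassDist d μ ν}} := by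
    refine ⟨1, fun v hv => ?_⟩
    obtain ⟨μ, hμ, rfl⟩ := hv
    exact le_trans (csInf_le (hwbb μ (hA μ hμ)) ⟨ν₀, hν₀, rfl⟩)
      (wass_le_one hd (hA μ hμ) (hB ν₀ hν₀))
  have hLBbdd : BddAbove {v : ℝ | ∃ ν ∈ B, v = sInf {w : ℝ | ∃ μ ∈ A, w = wassDist d μ ν}} := by
    refine ⟨1, fun v hv => ?_⟩
    obtain ⟨ν, hν, rfl⟩ := hv
    exact le_trans (csInf_le (hwbb' ν (hB ν hν)) ⟨μ₀, hμ₀, rfl⟩)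
      (wass_le_one hd (hA μ₀ hμ₀) (hB ν hν))
  have hLA0 : 0 ≤ sSup {v : ℝ | ∃ μ ∈ A, v = sInf {w : ℝ | ∃ ν ∈ B, w = wassDist d μ ν}} := by
    refine le_trans ?_ (le_csSup hLAbdd ⟨μ₀, hμ₀, rfl⟩)
    refine Real.sInf_nonneg ?_
    rintro w ⟨ν, hν, rfl⟩
    exact wass_nonneg hd (hA μ₀ hμ₀) (hB ν hν)
  have hLB0 : 0 ≤ sSup {v : ℝ | ∃ ν ∈ B, v = sInf {w : ℝ | ∃ μ ∈ A, w = wassDist d μ ν}} := by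
    refine le_trans ?_ (le_csSup hLBbdd ⟨ν₀, hν₀, rfl⟩)
    refine Real.sInf_nonneg ?_
    rintro w ⟨μ, hμ, rfl⟩
    exact wass_nonneg hd (hA μ hμ) (hB ν₀ hν₀)
  apply le_antisymm
  · -- max ≤ D
    rw [max_le_iff]
    constructor
    · refine Real.sSup_le ?_ hD0
      rintro v ⟨μ, hμ, rfl⟩
      exact hkeyA μ hμ
    · refine Real.sSup_le ?_ hD0
      rintro v ⟨ν, hν, rfl⟩
      exact hkeyB ν hν
  · -- D ≤ max
    refine Real.sSup_le ?_ (le_trans hLA0 (le_max_left _ _))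
    rintro v ⟨f, hf, rfl⟩
    rw [abs_sub_le_iff]
    constructor
    · -- sB f - sA f ≤ max, via the B side
      have hstep : ∀ ν ∈ B, expec ν f ≤ sSup {w : ℝ | ∃ μ ∈ A, w = expec μ f} +
          sSup {v : ℝ | ∃ ν ∈ B, v = sInf {w : ℝ | ∃ μ ∈ A, w = wassDist d μ ν}} := by
        intro ν hν
        have hinf : expec ν f - sSup {w : ℝ | ∃ μ ∈ A, w = expec μ f}
            ≤ sInf {w : ℝ | ∃ μ ∈ A, w = wassDist d μ ν} := by
          refine le_csInf (hwne' ν (hB ν hν)) ?_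
          rintro w ⟨μ, hμ, rfl⟩
          have h1 : expec ν f - expec μ f ≤ wassDist d μ ν :=
            le_csSup (wset_bdd (hA μ hμ) (hB ν hν)) ⟨f, hf, rfl⟩
          have h2 : expec μ f ≤ sSup {w : ℝ | ∃ μ ∈ A, w = expec μ f} :=
            le_csSup (sexp_bdd hA hf) ⟨μ, hμ, rfl⟩
          linarith
        have hle : sInf {w : ℝ | ∃ μ ∈ A, w = wassDist d μ ν}
            ≤ sSup {v : ℝ | ∃ ν ∈ B, v = sInf {w : ℝ | ∃ μ ∈ A, w = wassDist d μ ν}} :=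
          le_csSup hLBbdd ⟨ν, hν, rfl⟩
        linarith
      have : sSup {w : ℝ | ∃ ν ∈ B, w = expec ν f} ≤
          sSup {w : ℝ | ∃ μ ∈ A, w = expec μ f} +
          sSup {v : ℝ | ∃ ν ∈ B, v = sInf {w : ℝ | ∃ μ ∈ A, w = wassDist d μ ν}} := by
        refine Real.sSup_le ?_ ?_
        · rintro w ⟨ν, hν, rfl⟩
          exact hstep ν hν
        · have h1 := sexp_nonneg hA ⟨μ₀, hμ₀⟩ hf
          linarith
      have hmax := le_max_right
        (sSup {v : ℝ | ∃ μ ∈ A, v = sInf {w : ℝ | ∃ ν ∈ B, w = wassDist d μ ν}})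
        (sSup {v : ℝ | ∃ ν ∈ B, v = sInf {w : ℝ | ∃ μ ∈ A, w = wassDist d μ ν}})
      linarith
    · -- sA f - sB f ≤ max, via the A side
      have hstep : ∀ μ ∈ A, expec μ f ≤ sSup {w : ℝ | ∃ ν ∈ B, w = expec ν f} +
          sSup {v : ℝ | ∃ μ ∈ A, v = sInf {w : ℝ | ∃ ν ∈ B, w = wassDist d μ ν}} := by
        intro μ hμ
        have hinf : expec μ f - sSup {w : ℝ | ∃ ν ∈ B, w = expec ν f}
            ≤ sInf {w : ℝ | ∃ ν ∈ B, w = wassDist d μ ν} := by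
          refine le_csInf (hwne μ (hA μ hμ)) ?_
          rintro w ⟨ν, hν, rfl⟩
          have h1 : expec μ f - expec ν f ≤ wassDist d μ ν := by
            refine le_csSup (wset_bdd (hA μ hμ) (hB ν hν)) ?_
            refine ⟨(fun x => 1 - f x), nonexp_one_sub hf, ?_⟩
            rw [expec_one_sub (hA μ hμ), expec_one_sub (hB ν hν)]
            ring
          have h2 : expec ν f ≤ sSup {w : ℝ | ∃ ν ∈ B, w = expec ν f} :=
            le_csSup (sexp_bdd hB hf) ⟨ν, hν, rfl⟩
          linarith
        have hle : sInf {w : ℝ | ∃ ν ∈ B, w = wassDist d μ ν}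
            ≤ sSup {v : ℝ | ∃ μ ∈ A, v = sInf {w : ℝ | ∃ ν ∈ B, w = wassDist d μ ν}} :=
          le_csSup hLAbdd ⟨μ, hμ, rfl⟩
        linarith
      have : sSup {w : ℝ | ∃ μ ∈ A, w = expec μ f} ≤
          sSup {w : ℝ | ∃ ν ∈ B, w = expec ν f} +
          sSup {v : ℝ | ∃ μ ∈ A, v = sInf {w : ℝ | ∃ ν ∈ B, w = wassDist d μ ν}} := by
        refine Real.sSup_le ?_ ?_
        · rintro w ⟨μ, hμ, rfl⟩
          exact hstep μ hμ
        · have h1 := sexp_nonneg hB ⟨ν₀, hν₀⟩ hf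
          linarith
      have hmax := le_max_left
        (sSup {v : ℝ | ∃ μ ∈ A, v = sInf {w : ℝ | ∃ ν ∈ B, w = wassDist d μ ν}})
        (sSup {v : ℝ | ∃ ν ∈ B, v = sInf {w : ℝ | ∃ μ ∈ A, w = wassDist d μ ν}})
      linarith
end
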